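/- arXiv:1612.03901 — 7 statements merged into one kernel-verified Lean document; each statement's English description precedes it below -/
import Mathlib

section
/- Let α > 0 and R > 0. Then lim_{y → 0⁺} (1/y) · (2/R²) ∫_0^R (1 - e^{-(1+r^α) y}) r dr = 1 + 2R^α/(α+2). Equivalently, the unordered channel-gain CDF F(y) = (2/R²) ∫_0^R (1 - e^{-(1+r^α) y}) r dr satisfies F(y) = ℓ·y + o(y) as y → 0⁺, with ℓ = 1 + 2R^α/(α+2). -/
/-!
Since `1 - e^{-x} ≤ x` for `x ≥ 0`, the difference quotients `(1 - e^{-(1 + r^α) y}) r / y` are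
dominated by `(1 + r^α) r`, and they converge pointwise to it (the derivative of
`y ↦ 1 - e^{-c y}` at `0` is `c`). Dominated convergence therefore gives the limit
`(2 / R²) ∫₀ᴿ (1 + r^α) r dr = 1 + 2 R^α / (α + 2)`.
-/

open Filter Real Topology Set intervalIntegral Interval

lemma tendsto_one_sub_exp_neg_mul_div (c : ℝ) :
    Tendsto (fun y => (1 - exp (-(c * y))) / y) (𝓝[>] 0) (𝓝 c) := by
  have hd : HasDerivAt (fun y => 1 - exp (-(c * y))) c 0 := by
    simpa using (((hasDerivAt_id (0 : ℝ)).const_mul c).neg.exp).const_sub 1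
  simpa [div_eq_inv_mul] using hd.tendsto_slope_zero_right

lemma abs_one_sub_exp_neg_mul_div_le {c y : ℝ} (hc : 0 ≤ c) (hy : 0 < y) :
    |(1 - exp (-(c * y))) / y| ≤ c := by
  have hle : 1 - exp (-(c * y)) ≤ c * y := by linarith [one_sub_le_exp_neg (c * y)]
  have hnn : 0 ≤ 1 - exp (-(c * y)) := by
    simpa using exp_le_one_iff.2 (neg_nonpos.2 (mul_nonneg hc hy.le))
  rw [abs_of_nonneg (div_nonneg hnn hy.le), div_le_iff₀ hy]
  exact hle

theorem tendsto_one_div_mul_integral_one_sub_exp_neg {a b : ℝ} {c w : ℝ → ℝ}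
    (hc : Continuous c) (hw : Continuous w) (hc₀ : ∀ r ∈ Ι a b, 0 ≤ c r) :
    Tendsto (fun y => (1 / y) * ∫ r in a..b, (1 - exp (-(c r * y))) * w r) (𝓝[>] 0)
      (𝓝 (∫ r in a..b, c r * w r)) := by
  have hdiv : ∀ y, ∫ r in a..b, (1 - exp (-(c r * y))) / y * w r =
      (1 / y) * ∫ r in a..b, (1 - exp (-(c r * y))) * w r := fun y => by
    rw [← integral_const_mul]
    congr 1 with r
    ring
  refine Tendsto.congr hdiv ?_
  refine tendsto_integral_filter_of_dominated_convergence (fun r => c r * |w r|) ?_ ?_ ?_ ?_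
  · exact .of_forall fun _ => by fun_prop
  · filter_upwards [self_mem_nhdsWithin] with y hy
    refine .of_forall fun r hr => ?_
    rw [norm_mul, Real.norm_eq_abs, Real.norm_eq_abs]
    exact mul_le_mul_of_nonneg_right (abs_one_sub_exp_neg_mul_div_le (hc₀ r hr) hy) (abs_nonneg _)
  · exact (hc.mul hw.abs).intervalIntegrable _ _
  · exact .of_forall fun r _ => (tendsto_one_sub_exp_neg_mul_div (c r)).mul_const (w r)

theorem integral_rpow_mul_self {α : ℝ} (hα : -2 < α) (a b : ℝ) :
    ∫ r in a..b, r ^ α * r = (b ^ (α + 2) - a ^ (α + 2)) / (α + 2) := by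
  have hne : ∀ᵐ r : ℝ, r ≠ 0 := by
    simp [MeasureTheory.ae_iff]
  have hcongr : ∫ r in a..b, r ^ α * r = ∫ r in a..b, r ^ (α + 1) := by
    refine integral_congr_ae ?_
    filter_upwards [hne] with r hr _
    rw [rpow_add_one hr]
  rw [hcongr, integral_rpow (.inl (by linarith))]
  ring_nf

theorem integral_one_add_rpow_mul_self {α : ℝ} (hα : 0 < α) (R : ℝ) :
    ∫ r in (0 : ℝ)..R, (1 + r ^ α) * r = R ^ 2 / 2 + R ^ (α + 2) / (α + 2) := by
  have hint : Continuous fun r : ℝ => r ^ α * r := (continuous_rpow_const hα.le).mul continuous_id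
  simp only [add_mul, one_mul]
  rw [integral_add intervalIntegrable_id (hint.intervalIntegrable 0 R),
    integral_id, integral_rpow_mul_self (by linarith), zero_rpow (by linarith)]
  ring

theorem channel_gain_cdf_small_y_asymptotics (α R : ℝ) (hα : 0 < α) (hR : 0 < R) :
    Filter.Tendsto
      (fun y : ℝ =>
        (1 / y) * ((2 / R ^ 2) * ∫ r in (0 : ℝ)..R, (1 - Real.exp (-((1 + r ^ α) * y))) * r))
      (nhdsWithin 0 (Set.Ioi 0))
      (nhds (1 + 2 * R ^ α / (α + 2))) := by
  have hrpow : Continuous fun r : ℝ => r ^ α := continuous_rpow_const hα.le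
  have hlim : Tendsto (fun y => (1 / y) * ∫ r in (0 : ℝ)..R, (1 - exp (-((1 + r ^ α) * y))) * r)
      (𝓝[>] 0) (𝓝 (∫ r in (0 : ℝ)..R, (1 + r ^ α) * r)) := by
    refine tendsto_one_div_mul_integral_one_sub_exp_neg (continuous_const.add hrpow)
      continuous_id fun r hr => ?_
    rw [uIoc_of_le hR.le] at hr
    exact add_nonneg zero_le_one (rpow_nonneg hr.1.le α)
  have hvalue : 2 / R ^ 2 * ∫ r in (0 : ℝ)..R, (1 + r ^ α) * r = 1 + 2 * R ^ α / (α + 2) := by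
    rw [integral_one_add_rpow_mul_self hα, rpow_add hR, rpow_two]
    field_simp
  rw [← hvalue]
  exact (hlim.const_mul _).congr fun y => mul_left_comm _ _ _
end

section
/- Let α > 0, R > 0, and let M, n be integers with 1 ≤ n ≤ M. Define F(y) = (2/R²) ∫_0^R (1 - e^{-(1+r^α) y}) r dr and the n-th order-statistic CDF F_{(n)}(y) = ∑_{k=n}^{M} C(M,k) F(y)^k (1-F(y))^{M-k}. Then lim_{y → 0⁺} F_{(n)}(y)/y^n = (1/n) · (M!/((M-n)!(n-1)!)) · (1 + 2R^α/(α+2))^n. -/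
open Filter Real Finset

theorem order_statistic_cdf_small_y_asymptotics (α R : ℝ) (hα : 0 < α) (hR : 0 < R)
    (M n : ℕ) (hn1 : 1 ≤ n) (hnM : n ≤ M)
    (F : ℝ → ℝ)
    (hF : ∀ y : ℝ, F y = (2 / R ^ 2) * ∫ r in (0 : ℝ)..R, (1 - Real.exp (-((1 + r ^ α) * y))) * r)
    (Fn : ℝ → ℝ)
    (hFn : ∀ y : ℝ, Fn y = ∑ k ∈ Finset.Icc n M, (M.choose k : ℝ) * F y ^ k * (1 - F y) ^ (M - k)) :
    Filter.Tendsto (fun y : ℝ => Fn y / y ^ n)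
      (nhdsWithin 0 (Set.Ioi 0))
      (nhds ((1 / n) * ((M.factorial : ℝ) / ((M - n).factorial * (n - 1).factorial)) *
        (1 + 2 * R ^ α / (α + 2)) ^ n)) := by
  have hcontr : Continuous fun r : ℝ => r ^ α := Real.continuous_rpow_const hα.le
  set c : ℝ := 1 + 2 * R ^ α / (α + 2) with hc
  have hα2 : (0:ℝ) < α + 2 := by linarith
  -- value of the model integral
  have hI : (∫ r in (0:ℝ)..R, (1 + r ^ α) * r) = R ^ 2 / 2 + R ^ (α + 2) / (α + 2) := by
    have h1 : (∫ r in (0:ℝ)..R, (1 + r ^ α) * r)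
        = ∫ r in (0:ℝ)..R, (r + r ^ (α + 1)) := by
      apply intervalIntegral.integral_congr
      intro r hr
      rw [Set.uIcc_of_le hR.le] at hr
      rcases eq_or_lt_of_le hr.1 with h | h
      · simp only [← h]
        rw [Real.zero_rpow (by linarith : α + 1 ≠ 0), Real.zero_rpow (ne_of_gt hα)]
        ring
      · simp only
        rw [Real.rpow_add h, Real.rpow_one]; ring
    have h2 : IntervalIntegrable (fun r : ℝ => r ^ (α + 1)) MeasureTheory.volume 0 R :=
      (Real.continuous_rpow_const (by linarith)).intervalIntegrable 0 R
    rw [h1, intervalIntegral.integral_add (continuous_id'.intervalIntegrable 0 R) h2,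
      integral_id, integral_rpow (Or.inl (by linarith : (-1:ℝ) < α + 1))]
    have h3 : α + 1 + 1 = α + 2 := by ring
    rw [h3, Real.zero_rpow (ne_of_gt hα2)]
    ring
  have hgc : 2 / R ^ 2 * (R ^ 2 / 2 + R ^ (α + 2) / (α + 2)) = c := by
    have h4 : R ^ (α + 2) = R ^ α * R ^ 2 := by
      rw [Real.rpow_add hR, ← Real.rpow_natCast R 2]
      norm_num
    rw [h4, hc]
    field_simp
  have hcont2 : Continuous fun r : ℝ => (1 + r ^ α) * r :=
    (continuous_const.add hcontr).mul continuous_id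
  have hInt1 : ∀ y : ℝ, IntervalIntegrable
      (fun r => (1 - Real.exp (-((1 + r ^ α) * y))) * r) MeasureTheory.volume 0 R := by
    intro y
    exact ((continuous_const.sub (Real.continuous_exp.comp
      ((continuous_const.add hcontr).mul continuous_const).neg)).mul continuous_id).intervalIntegrable 0 R
  -- upper bound : F y / y ≤ c
  have hub : ∀ y ∈ Set.Ioi (0:ℝ), F y / y ≤ c := by
    intro y hy
    have hy : (0:ℝ) < y := hy
    have hle : (∫ r in (0:ℝ)..R, (1 - Real.exp (-((1 + r ^ α) * y))) * r)
        ≤ ∫ r in (0:ℝ)..R, ((1 + r ^ α) * r) * y := by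
      apply intervalIntegral.integral_mono_on hR.le (hInt1 y)
        ((hcont2.mul continuous_const).intervalIntegrable 0 R)
      intro r hr
      have hr0 : (0:ℝ) ≤ r := hr.1
      have hra : (0:ℝ) ≤ r ^ α := Real.rpow_nonneg hr0 α
      have h1 : 1 - Real.exp (-((1 + r ^ α) * y)) ≤ (1 + r ^ α) * y := by
        nlinarith [Real.add_one_le_exp (-((1 + r ^ α) * y))]
      simp only [Pi.mul_apply]
      nlinarith [mul_le_mul_of_nonneg_right h1 hr0]
    rw [intervalIntegral.integral_mul_const, hI] at hle
    rw [hF, div_le_iff₀ hy]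
    calc 2 / R ^ 2 * ∫ r in (0:ℝ)..R, (1 - Real.exp (-((1 + r ^ α) * y))) * r
        ≤ 2 / R ^ 2 * ((R ^ 2 / 2 + R ^ (α + 2) / (α + 2)) * y) :=
          mul_le_mul_of_nonneg_left hle (by positivity)
      _ = c * y := by rw [← hgc]; ring
  -- lower bound : c * exp(-(1+R^α) y) ≤ F y / y
  have hlb : ∀ y ∈ Set.Ioi (0:ℝ), c * Real.exp (-((1 + R ^ α) * y)) ≤ F y / y := by
    intro y hy
    have hy : (0:ℝ) < y := hy
    have hle : (∫ r in (0:ℝ)..R, ((1 + r ^ α) * r) * (y * Real.exp (-((1 + R ^ α) * y))))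
        ≤ ∫ r in (0:ℝ)..R, (1 - Real.exp (-((1 + r ^ α) * y))) * r := by
      apply intervalIntegral.integral_mono_on hR.le
        ((hcont2.mul continuous_const).intervalIntegrable 0 R) (hInt1 y)
      intro r hr
      have hr0 : (0:ℝ) ≤ r := hr.1
      have hra : (0:ℝ) ≤ r ^ α := Real.rpow_nonneg hr0 α
      have hrR : r ^ α ≤ R ^ α := Real.rpow_le_rpow hr0 hr.2 hα.le
      have hu0 : (0:ℝ) ≤ (1 + r ^ α) * y := by positivity
      have hE : Real.exp (-((1 + R ^ α) * y)) ≤ Real.exp (-((1 + r ^ α) * y)) := by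
        apply Real.exp_le_exp.mpr
        nlinarith
      have hmul : Real.exp (-((1 + r ^ α) * y)) * Real.exp ((1 + r ^ α) * y) = 1 := by
        rw [← Real.exp_add]; simp
      have key : (1 + r ^ α) * y * Real.exp (-((1 + r ^ α) * y))
          ≤ 1 - Real.exp (-((1 + r ^ α) * y)) := by
        nlinarith [mul_le_mul_of_nonneg_right (Real.add_one_le_exp ((1 + r ^ α) * y))
          (Real.exp_pos (-((1 + r ^ α) * y))).le, hmul]
      have h1 : (1 + r ^ α) * y * Real.exp (-((1 + R ^ α) * y))
          ≤ 1 - Real.exp (-((1 + r ^ α) * y)) :=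
        le_trans (mul_le_mul_of_nonneg_left hE hu0) key
      simp only [Pi.mul_apply]
      nlinarith [mul_le_mul_of_nonneg_right h1 hr0]
    rw [intervalIntegral.integral_mul_const, hI] at hle
    rw [hF, le_div_iff₀ hy]
    calc c * Real.exp (-((1 + R ^ α) * y)) * y
        = 2 / R ^ 2 * ((R ^ 2 / 2 + R ^ (α + 2) / (α + 2)) * (y * Real.exp (-((1 + R ^ α) * y)))) := by
          rw [← hgc]; ring
      _ ≤ 2 / R ^ 2 * ∫ r in (0:ℝ)..R, (1 - Real.exp (-((1 + r ^ α) * y))) * r :=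
          mul_le_mul_of_nonneg_left hle (by positivity)
  -- squeeze: F y / y → c
  have hlow : Tendsto (fun y : ℝ => c * Real.exp (-((1 + R ^ α) * y)))
      (nhdsWithin 0 (Set.Ioi 0)) (nhds c) := by
    have hco : Continuous fun y : ℝ => c * Real.exp (-((1 + R ^ α) * y)) := by
      continuity
    have h0 := hco.tendsto 0
    simp only [mul_zero, neg_zero, Real.exp_zero, mul_one] at h0
    exact h0.mono_left nhdsWithin_le_nhds
  have hg : Tendsto (fun y : ℝ => F y / y) (nhdsWithin 0 (Set.Ioi 0)) (nhds c) := by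
    apply tendsto_of_tendsto_of_tendsto_of_le_of_le' hlow tendsto_const_nhds
    · filter_upwards [self_mem_nhdsWithin] with y hy
      exact hlb y hy
    · filter_upwards [self_mem_nhdsWithin] with y hy
      exact hub y hy
  -- F y → 0
  have hidt : Tendsto (fun y : ℝ => y) (nhdsWithin 0 (Set.Ioi 0)) (nhds 0) :=
    (continuous_id.tendsto 0).mono_left nhdsWithin_le_nhds
  have hF0 : Tendsto F (nhdsWithin 0 (Set.Ioi 0)) (nhds 0) := by
    have h := hg.mul hidt
    rw [mul_zero] at h
    apply h.congr'
    filter_upwards [self_mem_nhdsWithin] with y hy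
    exact div_mul_cancel₀ (F y) (ne_of_gt hy)
  -- rewrite Fn y / y^n
  have key : ∀ᶠ y in nhdsWithin (0:ℝ) (Set.Ioi 0),
      Fn y / y ^ n = ∑ k ∈ Finset.Icc n M,
        (M.choose k : ℝ) * ((F y / y) ^ n * F y ^ (k - n)) * (1 - F y) ^ (M - k) := by
    filter_upwards [self_mem_nhdsWithin] with y hy
    have hy0 : y ≠ 0 := ne_of_gt hy
    rw [hFn, Finset.sum_div]
    apply Finset.sum_congr rfl
    intro k hk
    have hnk : n ≤ k := (Finset.mem_Icc.mp hk).1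
    have hsplit : F y ^ k = F y ^ n * F y ^ (k - n) := by
      rw [← pow_add, Nat.add_sub_cancel' hnk]
    rw [hsplit, div_pow]
    field_simp
  -- limit of each summand
  have hsum : Tendsto (fun y : ℝ => ∑ k ∈ Finset.Icc n M,
      (M.choose k : ℝ) * ((F y / y) ^ n * F y ^ (k - n)) * (1 - F y) ^ (M - k))
      (nhdsWithin 0 (Set.Ioi 0))
      (nhds (∑ k ∈ Finset.Icc n M,
        (M.choose k : ℝ) * (c ^ n * (0:ℝ) ^ (k - n)) * (1 - 0) ^ (M - k))) := by
    apply tendsto_finset_sum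
    intro k _
    exact ((((hg.pow n).mul (hF0.pow (k - n))).const_mul _).mul
      ((tendsto_const_nhds.sub hF0).pow (M - k)))
  have hval : (∑ k ∈ Finset.Icc n M,
      (M.choose k : ℝ) * (c ^ n * (0:ℝ) ^ (k - n)) * (1 - 0) ^ (M - k))
      = (M.choose n : ℝ) * c ^ n := by
    rw [Finset.sum_eq_single_of_mem n (Finset.mem_Icc.mpr ⟨le_refl n, hnM⟩)]
    · simp
    · intro b hb hbn
      have hb' : n ≤ b := (Finset.mem_Icc.mp hb).1
      rw [zero_pow (by omega : b - n ≠ 0)]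
      ring
  have hchoose : ((1:ℝ) / n) * ((M.factorial : ℝ) / ((M - n).factorial * (n - 1).factorial))
      = (M.choose n : ℝ) := by
    have h1 := Nat.choose_mul_factorial_mul_factorial hnM
    have h2 : n.factorial = n * (n - 1).factorial := by
      cases n with
      | zero => omega
      | succ m => simp [Nat.factorial_succ]
    rw [h2] at h1
    have h1' : ((M.choose n : ℝ)) * ((n : ℝ) * ((n - 1).factorial : ℝ)) * ((M - n).factorial : ℝ)
        = (M.factorial : ℝ) := by exact_mod_cast h1
    have hn0 : (n : ℝ) ≠ 0 := by positivity
    have hf1 : ((n - 1).factorial : ℝ) ≠ 0 := by positivity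
    have hf2 : ((M - n).factorial : ℝ) ≠ 0 := by positivity
    field_simp
    linarith [h1']
  rw [tendsto_congr' key]
  rw [hval] at hsum
  have hrw : (1 / (n:ℝ)) * ((M.factorial : ℝ) / ((M - n).factorial * (n - 1).factorial)) * c ^ n
      = (M.choose n : ℝ) * c ^ n := by rw [hchoose]
  rw [hrw]
  exact hsum
end

section
/- Let m and n be integers with 1 ≤ m < n, let G_m > 0 and G_n > 0, and let P_m, P_n : ℝ → ℝ be functions satisfying P_m(ρ) - G_m·ρ^{-m} = o(ρ^{-m}) and P_n(ρ) - G_n·ρ^{-n} = o(ρ^{-n}) as ρ → ∞. Then lim_{ρ→∞} ( - log( P_m(ρ) + P_n(ρ) - P_m(ρ)·P_n(ρ) ) / log ρ ) = m. -/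
/-!
Write `Q = Pm + Pn - Pm Pn`. Since `n > m`, both `Pn` and `Pn / ρ^{-m}` tend to zero, so
`Q / ρ^{-m} → Gm`. Then `-log Q / log ρ = m - log (Q / ρ^{-m}) / log ρ`, and the last term
vanishes because its numerator tends to `log Gm` while `log ρ → ∞`.
-/

open Filter Real Topology

theorem Filter.Tendsto.div_of_tendsto_sub_mul_div {α 𝕜 : Type*} [Field 𝕜] [TopologicalSpace 𝕜]
    [ContinuousAdd 𝕜] {l : Filter α} {f g : α → 𝕜} {c : 𝕜} (hg : ∀ᶠ x in l, g x ≠ 0)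
    (h : Tendsto (fun x => (f x - c * g x) / g x) l (𝓝 0)) :
    Tendsto (fun x => f x / g x) l (𝓝 c) := by
  have hc := h.add_const c
  rw [zero_add] at hc
  refine hc.congr' ?_
  filter_upwards [hg] with x hx
  rw [sub_div, mul_div_cancel_right₀ _ hx, sub_add_cancel]

lemma eventually_rpow_ne_zero_atTop (a : ℝ) : ∀ᶠ ρ : ℝ in atTop, ρ ^ a ≠ 0 :=
  (eventually_gt_atTop 0).mono fun _ hρ => (rpow_pos_of_pos hρ a).ne'

lemma tendsto_div_rpow_neg_of_lt {f : ℝ → ℝ} {a b c : ℝ} (hab : a < b)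
    (hf : Tendsto (fun ρ => f ρ / ρ ^ (-b)) atTop (𝓝 c)) :
    Tendsto (fun ρ => f ρ / ρ ^ (-a)) atTop (𝓝 0) := by
  have h := hf.mul (tendsto_rpow_neg_atTop (sub_pos.mpr hab))
  rw [mul_zero] at h
  refine h.congr' ?_
  filter_upwards [eventually_gt_atTop 0] with ρ hρ
  have hsplit : ρ ^ (-a) = ρ ^ (-b) * ρ ^ (b - a) := by rw [← rpow_add hρ]; ring_nf
  rw [hsplit, rpow_neg hρ.le (b - a), div_mul_eq_div_div, div_eq_mul_inv (f ρ / _)]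

lemma tendsto_of_div_rpow_neg {f : ℝ → ℝ} {b c : ℝ} (hb : 0 < b)
    (hf : Tendsto (fun ρ => f ρ / ρ ^ (-b)) atTop (𝓝 c)) : Tendsto f atTop (𝓝 0) := by
  simpa using tendsto_div_rpow_neg_of_lt hb hf

lemma tendsto_add_sub_mul_div_rpow_neg {p q : ℝ → ℝ} {a b c d : ℝ} (hb : 0 < b) (hab : a < b)
    (hp : Tendsto (fun ρ => p ρ / ρ ^ (-a)) atTop (𝓝 c))
    (hq : Tendsto (fun ρ => q ρ / ρ ^ (-b)) atTop (𝓝 d)) :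
    Tendsto (fun ρ => (p ρ + q ρ - p ρ * q ρ) / ρ ^ (-a)) atTop (𝓝 c) := by
  have h := (hp.add (tendsto_div_rpow_neg_of_lt hab hq)).sub
    (hp.mul (tendsto_of_div_rpow_neg hb hq))
  rw [add_zero, mul_zero, sub_zero] at h
  refine h.congr' ?_
  filter_upwards [eventually_rpow_ne_zero_atTop (-a)] with ρ hρ
  field_simp

lemma tendsto_neg_log_div_log_of_div_rpow_neg {f : ℝ → ℝ} {d c : ℝ} (hc : 0 < c)
    (hf : Tendsto (fun ρ => f ρ / ρ ^ (-d)) atTop (𝓝 c)) :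
    Tendsto (fun ρ => -log (f ρ) / log ρ) atTop (𝓝 d) := by
  have h := tendsto_const_nhds (x := d) |>.sub
    (((continuousAt_log hc.ne').tendsto.comp hf).mul tendsto_log_atTop.inv_tendsto_atTop)
  rw [mul_zero, sub_zero] at h
  refine h.congr' ?_
  filter_upwards [eventually_gt_atTop 1, hf.eventually (eventually_gt_nhds hc)]
    with ρ hρ hfρ
  have hρ0 : 0 < ρ := zero_lt_one.trans hρ
  have hlog : log ρ ≠ 0 := (log_pos hρ).ne'
  have hr : ρ ^ (-d) ≠ 0 := (rpow_pos_of_pos hρ0 _).ne'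
  have hlogf : log (f ρ) = log (f ρ / ρ ^ (-d)) - d * log ρ := by
    rw [log_div (div_ne_zero_iff.mp hfρ.ne').1 hr, log_rpow hρ0]
    ring
  rw [Function.comp_apply, hlogf, neg_sub, sub_div, mul_div_cancel_right₀ _ hlog, Pi.inv_apply,
    div_eq_mul_inv _ (log ρ)]

theorem secrecy_diversity_order_of_pair_general (m n : ℕ) (hmn : m < n)
    (Gm Gn : ℝ) (hGm : 0 < Gm)
    (Pm Pn : ℝ → ℝ)
    (hPm : Filter.Tendsto (fun ρ : ℝ => (Pm ρ - Gm * ρ ^ (-(m : ℝ))) / ρ ^ (-(m : ℝ)))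
      Filter.atTop (nhds 0))
    (hPn : Filter.Tendsto (fun ρ : ℝ => (Pn ρ - Gn * ρ ^ (-(n : ℝ))) / ρ ^ (-(n : ℝ)))
      Filter.atTop (nhds 0)) :
    Filter.Tendsto
      (fun ρ : ℝ => -(Real.log (Pm ρ + Pn ρ - Pm ρ * Pn ρ)) / Real.log ρ)
      Filter.atTop (nhds m) := by
  have hm := hPm.div_of_tendsto_sub_mul_div (eventually_rpow_ne_zero_atTop _)
  have hn := hPn.div_of_tendsto_sub_mul_div (eventually_rpow_ne_zero_atTop _)
  have hn0 : (0 : ℝ) < n := by exact_mod_cast (Nat.zero_le m).trans_lt hmn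
  exact tendsto_neg_log_div_log_of_div_rpow_neg hGm
    (tendsto_add_sub_mul_div_rpow_neg hn0 (by exact_mod_cast hmn) hm hn)

theorem secrecy_diversity_order_of_pair (m n : ℕ) (hm : 1 ≤ m) (hmn : m < n)
    (Gm Gn : ℝ) (hGm : 0 < Gm) (hGn : 0 < Gn)
    (Pm Pn : ℝ → ℝ)
    (hPm : Filter.Tendsto (fun ρ : ℝ => (Pm ρ - Gm * ρ ^ (-(m : ℝ))) / ρ ^ (-(m : ℝ)))
      Filter.atTop (nhds 0))
    (hPn : Filter.Tendsto (fun ρ : ℝ => (Pn ρ - Gn * ρ ^ (-(n : ℝ))) / ρ ^ (-(n : ℝ)))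
      Filter.atTop (nhds 0)) :
    Filter.Tendsto
      (fun ρ : ℝ => -(Real.log (Pm ρ + Pn ρ - Pm ρ * Pn ρ)) / Real.log ρ)
      Filter.atTop (nhds m) :=
  secrecy_diversity_order_of_pair_general m n hmn Gm Gn hGm Pm Pn hPm hPn
end

section
/- Let N ≥ 2 be an integer and P_S > 0, β > 0. Let X be an exponential random variable with rate 1 and Y an independent Gamma random variable with shape N-1 and rate 1. (i) If β ≠ P_S, then the law of P_S·X + β·Y is absolutely continuous with density f(z) = (1/P_S)(1 - β/P_S)^{1-N} e^{-z/P_S} ( 1 - ∑_{l=0}^{N-2} ((1/β - 1/P_S)^l z^l / l!) e^{-(1/β - 1/P_S) z} ) for z > 0 (and 0 for z ≤ 0). (ii) If β = P_S, then P_S·X + β·Y is Gamma distributed with shape N and rate 1/P_S, i.e., it has density z^{N-1} e^{-z/P_S} / (P_S^N (N-1)!) on (0,∞). -/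
open MeasureTheory ProbabilityTheory Real Finset

open scoped ENNReal NNReal

lemma hasDerivAt_poly (k : ℕ) (δ u : ℝ) :
    HasDerivAt (fun u : ℝ => ∑ l ∈ Finset.range (k+1), (k.factorial / l.factorial : ℝ) * δ^l * u^l)
      (δ * (∑ l ∈ Finset.range (k+1), (k.factorial / l.factorial : ℝ) * δ^l * u^l) - δ^(k+1) * u^k) u := by
  have h : HasDerivAt (fun u : ℝ => ∑ l ∈ Finset.range (k+1), (k.factorial / l.factorial : ℝ) * δ^l * u^l)
      (∑ l ∈ Finset.range (k+1), (k.factorial / l.factorial : ℝ) * δ^l * (l * u^(l-1))) u := by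
    refine HasDerivAt.fun_sum fun l _ => ?_
    simpa [mul_assoc] using (hasDerivAt_pow l u).const_mul ((k.factorial / l.factorial : ℝ) * δ^l)
  convert h using 1
  rw [Finset.sum_range_succ' (fun l => (k.factorial / l.factorial : ℝ) * δ^l * (l * u^(l-1)))]
  rw [Finset.mul_sum, Finset.sum_range_succ]
  have hk : (k.factorial / k.factorial : ℝ) = 1 := by
    field_simp
  simp only [Nat.cast_zero, pow_zero, zero_mul, mul_zero, add_zero, hk, one_mul]
  have hsum : ∑ x ∈ Finset.range k, δ * ((k.factorial / x.factorial : ℝ) * δ ^ x * u ^ x)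
      = ∑ i ∈ Finset.range k, (k.factorial / (i+1).factorial : ℝ) * δ ^ (i+1) * ((i+1 : ℕ) * u ^ (i+1-1)) := by
    refine Finset.sum_congr rfl fun i _ => ?_
    have hfi : (i + 1).factorial = (i+1) * i.factorial := Nat.factorial_succ i
    have h0 : (i.factorial : ℝ) ≠ 0 := Nat.cast_ne_zero.mpr i.factorial_ne_zero
    simp only [Nat.add_sub_cancel, hfi]
    push_cast
    field_simp
    ring
  rw [hsum]
  ring

lemma integral_pow_mul_exp_neg (k : ℕ) {δ : ℝ} (hδ : δ ≠ 0) (z : ℝ) :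
    ∫ u in (0:ℝ)..z, u^k * Real.exp (-(δ*u)) =
      (k.factorial : ℝ)/δ^(k+1) *
        (1 - ∑ l ∈ Finset.range (k+1), (δ^l * z^l / (l.factorial : ℝ)) * Real.exp (-(δ*z))) := by
  set p : ℝ → ℝ := fun u => ∑ l ∈ Finset.range (k+1), (k.factorial / l.factorial : ℝ) * δ^l * u^l with hp
  have key : ∀ u : ℝ, HasDerivAt (fun u => -(Real.exp (-(δ*u)) * p u) / δ^(k+1))
      (u^k * Real.exp (-(δ*u))) u := by
    intro u
    have he : HasDerivAt (fun u : ℝ => Real.exp (-(δ*u))) (Real.exp (-(δ*u)) * (-δ)) u := by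
      simpa using (((hasDerivAt_id u).const_mul δ).neg).exp
    have hpd := hasDerivAt_poly k δ u
    have := ((he.fun_mul hpd).fun_neg).div_const (δ^(k+1))
    refine this.congr_deriv ?_
    have hδk : (δ:ℝ)^(k+1) ≠ 0 := pow_ne_zero _ hδ
    rw [div_eq_iff hδk]
    ring
  have hcont : Continuous (fun u : ℝ => u^k * Real.exp (-(δ*u))) := by
    continuity
  rw [intervalIntegral.integral_eq_sub_of_hasDerivAt (fun u _ => key u)
    (hcont.intervalIntegrable 0 z)]
  have hp0 : p 0 = k.factorial := by
    simp only [hp]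
    rw [Finset.sum_eq_single 0]
    · simp
    · intro b _ hb; simp [pow_eq_zero_iff, hb]
    · simp
  have hpz : p z = (k.factorial : ℝ) * ∑ l ∈ Finset.range (k+1), δ^l * z^l / (l.factorial : ℝ) := by
    rw [hp, Finset.mul_sum]
    refine Finset.sum_congr rfl fun l _ => ?_
    field_simp
  rw [hp0, hpz]
  rw [← Finset.sum_mul]
  have hδk : (δ:ℝ)^(k+1) ≠ 0 := pow_ne_zero _ hδ
  simp only [mul_zero, neg_zero, Real.exp_zero]
  field_simp
  ring

lemma measurable_gammaPDF (a r : ℝ) : Measurable (gammaPDF a r) :=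
  (measurable_gammaPDFReal a r).ennreal_ofReal

lemma map_const_mul_withDensity {c : ℝ} (hc : 0 < c) {f : ℝ → ℝ≥0∞} (hf : Measurable f) :
    Measure.map (fun x => c * x) (volume.withDensity f) =
      volume.withDensity (fun y => ENNReal.ofReal c⁻¹ * f (c⁻¹ * y)) := by
  ext s hs
  rw [Measure.map_apply (measurable_const_mul c) hs,
    withDensity_apply _ ((measurable_const_mul c) hs), withDensity_apply _ hs]
  have h2 : ∀ x : ℝ, c⁻¹ * (c * x) = x := fun x => by field_simp
  have h1 : ∫⁻ y in s, ENNReal.ofReal c⁻¹ * f (c⁻¹ * y) ∂(Measure.map (fun x => c * x) volume)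
      = ENNReal.ofReal c⁻¹ * ∫⁻ x in (fun x => c * x) ⁻¹' s, f x ∂volume := by
    rw [Measure.restrict_map (measurable_const_mul c) hs,
      lintegral_map (by fun_prop) (measurable_const_mul c)]
    simp only [h2]
    rw [lintegral_const_mul _ hf]
  rw [Real.map_volume_mul_left hc.ne'] at h1
  simp only [Measure.restrict_smul, lintegral_smul_measure, abs_of_pos (inv_pos.mpr hc)] at h1
  exact ((ENNReal.mul_right_inj (by simp [hc]) ENNReal.ofReal_ne_top).mp h1).symm

lemma gammaMeasure_map_const_mul {a r c : ℝ} (hr : 0 < r) (hc : 0 < c) :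
    Measure.map (fun x => c * x) (gammaMeasure a r) = gammaMeasure a (r / c) := by
  rw [gammaMeasure, gammaMeasure, map_const_mul_withDensity hc (measurable_gammaPDF a r)]
  congr 1
  funext y
  rw [gammaPDF_eq, gammaPDF_eq, ← ENNReal.ofReal_mul (by positivity)]
  congr 1
  have hcy : (0 ≤ c⁻¹ * y) ↔ (0 ≤ y) := by
    constructor
    · intro h; nlinarith [inv_pos.mpr hc]
    · intro h; positivity
  by_cases hy : 0 ≤ y
  · rw [if_pos (hcy.mpr hy), if_pos hy]
    have h1 : (c⁻¹ * y) ^ (a - 1) = c⁻¹ ^ (a - 1) * y ^ (a - 1) :=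
      Real.mul_rpow (by positivity) hy
    have h2 : (r / c) ^ a = r ^ a * c⁻¹ ^ a := by
      rw [div_eq_mul_inv]; exact Real.mul_rpow hr.le (by positivity)
    have h3 : c⁻¹ ^ a = c⁻¹ ^ (a - 1) * c⁻¹ := by
      have := Real.rpow_add (x := c⁻¹) (by positivity) (a-1) 1
      rw [Real.rpow_one] at this
      rw [← this]; norm_num
    have h4 : r * (c⁻¹ * y) = r / c * y := by field_simp
    rw [h1, h2, h3, h4]
    ring
  · rw [if_neg (fun h => hy (hcy.mp h)), if_neg hy, mul_zero]

lemma map_add_prod_withDensity {f g : ℝ → ℝ≥0∞} (hf : Measurable f) (hg : Measurable g) :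
    Measure.map (fun p : ℝ × ℝ => p.1 + p.2)
        ((volume.withDensity f).prod (volume.withDensity g)) =
      volume.withDensity (fun z => ∫⁻ x, f x * g (z - x)) := by
  ext s hs
  rw [Measure.map_apply measurable_add hs, withDensity_apply _ hs]
  have hps : MeasurableSet ((fun p : ℝ × ℝ => p.1 + p.2) ⁻¹' s) := measurable_add hs
  rw [Measure.prod_apply hps]
  have inner : ∀ x : ℝ, (volume.withDensity g) (Prod.mk x ⁻¹' ((fun p : ℝ × ℝ => p.1 + p.2) ⁻¹' s))
      = ∫⁻ z in s, g (z - x) := by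
    intro x
    have hpre : Prod.mk x ⁻¹' ((fun p : ℝ × ℝ => p.1 + p.2) ⁻¹' s) = (fun y => x + y) ⁻¹' s := rfl
    rw [hpre, withDensity_apply _ ((measurable_const_add x) hs)]
    have hmap : Measure.map (fun y : ℝ => x + y) volume = volume := map_add_left_eq_self volume x
    calc ∫⁻ y in (fun y => x + y) ⁻¹' s, g y ∂volume
        = ∫⁻ z in s, g (z - x) ∂(Measure.map (fun y : ℝ => x + y) volume) := by
          rw [Measure.restrict_map (measurable_const_add x) hs,
            lintegral_map (by fun_prop) (measurable_const_add x)]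
          congr 1; funext y; congr 1; ring
      _ = ∫⁻ z in s, g (z - x) ∂volume := by rw [hmap]
  simp_rw [inner]
  have hmeas : Measurable fun x : ℝ => ∫⁻ z in s, g (z - x) := by
    apply Measurable.lintegral_prod_right (f := fun x z => g (z - x))
    exact hg.comp (measurable_snd.sub measurable_fst)
  rw [lintegral_withDensity_eq_lintegral_mul _ hf hmeas]
  have hswap : ∫⁻ x, f x * ∫⁻ z in s, g (z - x) ∂volume ∂volume
      = ∫⁻ z in s, ∫⁻ x, f x * g (z - x) ∂volume ∂volume := by
    have h1 : ∀ x : ℝ, f x * ∫⁻ z in s, g (z - x) ∂volume = ∫⁻ z in s, f x * g (z - x) ∂volume :=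
      fun x => (lintegral_const_mul _ (hg.comp (measurable_id.sub_const x))).symm
    simp_rw [h1]
    exact lintegral_lintegral_swap
      ((hf.comp measurable_fst).mul (hg.comp (measurable_snd.sub measurable_fst))).aemeasurable
  simpa [Pi.mul_apply] using hswap

lemma gammaPDF_one' (r x : ℝ) :
    gammaPDF 1 r x = ENNReal.ofReal (if 0 ≤ x then r * Real.exp (-(r*x)) else 0) := by
  rw [gammaPDF_eq]
  congr 1
  split_ifs with h
  · norm_num [Real.Gamma_one, Real.rpow_one]
  · rfl

lemma gammaPDF_nat (k : ℕ) (r y : ℝ) :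
    gammaPDF ((k:ℝ)+1) r y =
      ENNReal.ofReal (if 0 ≤ y then r^(k+1) / (k.factorial : ℝ) * y^k * Real.exp (-(r*y)) else 0) := by
  rw [gammaPDF_eq]
  congr 1
  split_ifs with h
  · have h1 : ((k:ℝ) + 1) - 1 = ((k:ℕ) : ℝ) := by push_cast; ring
    have h2 : ((k:ℝ) + 1) = (((k+1:ℕ)) : ℝ) := by push_cast; ring
    rw [h1, Real.rpow_natCast, Real.Gamma_nat_eq_factorial, h2, Real.rpow_natCast]
  · rfl

lemma conv_density_neg (a r₁ r₂ : ℝ) {z : ℝ} (hz : z < 0) :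
    ∫⁻ x, gammaPDF 1 r₁ x * gammaPDF a r₂ (z - x) = 0 := by
  have h : ∀ x : ℝ, gammaPDF 1 r₁ x * gammaPDF a r₂ (z - x) = 0 := by
    intro x
    rcases lt_or_ge x 0 with hx | hx
    · rw [gammaPDF_of_neg hx, zero_mul]
    · rw [gammaPDF_of_neg (a := a) (by linarith : z - x < 0), mul_zero]
  simp_rw [h, lintegral_zero]

lemma conv_density_eval (k : ℕ) {PS β z : ℝ} (hPS : 0 < PS) (hβ : 0 < β) (hz : 0 < z) :
    ∫⁻ x, gammaPDF 1 (1/PS) x * gammaPDF ((k:ℝ)+1) (1/β) (z - x)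
      = ENNReal.ofReal ((1/PS) * ((1/β)^(k+1) / (k.factorial : ℝ)) * Real.exp (-(z/PS)) *
          (∫ u in (0:ℝ)..z, u^k * Real.exp (-((1/β - 1/PS)*u)))) := by
  set G : ℝ → ℝ := fun x => (1/PS) * Real.exp (-((1/PS)*x)) *
      ((1/β)^(k+1)/(k.factorial:ℝ) * (z-x)^k * Real.exp (-((1/β)*(z-x)))) with hG
  have hGcont : Continuous G := by fun_prop
  have step1 : ∀ x : ℝ, gammaPDF 1 (1/PS) x * gammaPDF ((k:ℝ)+1) (1/β) (z-x)
      = ENNReal.ofReal (Set.indicator (Set.Icc 0 z) G x) := by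
    intro x
    rw [gammaPDF_one', gammaPDF_nat]
    by_cases hx : x ∈ Set.Icc 0 z
    · rw [Set.mem_Icc] at hx
      obtain ⟨hx0, hxz⟩ := hx
      rw [Set.indicator_of_mem (Set.mem_Icc.mpr ⟨hx0, hxz⟩), if_pos hx0,
        if_pos (by linarith : (0:ℝ) ≤ z - x), ← ENNReal.ofReal_mul (by positivity)]
    · rw [Set.indicator_of_notMem hx]
      rw [Set.mem_Icc, not_and_or, not_le, not_le] at hx
      rcases hx with hx | hx
      · rw [if_neg (not_le.mpr hx)]
        simp
      · rw [if_neg (not_le.mpr (by linarith : z - x < 0))]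
        simp
  simp_rw [step1]
  have hInd : Integrable (Set.indicator (Set.Icc 0 z) G) volume :=
    (hGcont.integrableOn_Icc).integrable_indicator measurableSet_Icc
  have hNonneg : 0 ≤ᵐ[volume] Set.indicator (Set.Icc 0 z) G := by
    filter_upwards with x
    apply Set.indicator_nonneg
    intro y hy
    have h1 : (0:ℝ) ≤ z - y := by linarith [hy.2]
    rw [hG]
    positivity
  rw [← MeasureTheory.ofReal_integral_eq_lintegral_ofReal hInd hNonneg]
  congr 1
  rw [MeasureTheory.integral_indicator measurableSet_Icc, MeasureTheory.integral_Icc_eq_integral_Ioc,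
    ← intervalIntegral.integral_of_le hz.le]
  have hGeq : ∀ x : ℝ, G x = (1/PS) * ((1/β)^(k+1)/(k.factorial:ℝ)) * Real.exp (-(z/PS)) *
      ((z-x)^k * Real.exp (-((1/β - 1/PS)*(z-x)))) := by
    intro x
    show (1/PS) * Real.exp (-((1/PS)*x)) *
      ((1/β)^(k+1)/(k.factorial:ℝ) * (z-x)^k * Real.exp (-((1/β)*(z-x)))) = _
    rw [show (-((1/PS)*x)) = (-(z/PS)) + ((z-x)/PS) by field_simp; ring,
      show (-((1/β - 1/PS)*(z-x))) = (-((1/β)*(z-x))) + ((z-x)/PS) by field_simp; ring,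
      Real.exp_add, Real.exp_add]
    ring
  simp_rw [hGeq]
  rw [intervalIntegral.integral_const_mul]
  congr 1
  have hsub := intervalIntegral.integral_comp_sub_left
    (a := (0:ℝ)) (b := z) (fun u => u^k * Real.exp (-((1/β - 1/PS)*u))) z
  simp only [sub_zero, sub_self] at hsub
  exact hsub

theorem interference_density_exponential_plus_gamma
    {Ω : Type*} [MeasurableSpace Ω] (P : Measure Ω) [IsProbabilityMeasure P]
    (N : ℕ) (hN : 2 ≤ N) (PS β : ℝ) (hPS : 0 < PS) (hβ : 0 < β)
    (X Y : Ω → ℝ) (hXmeas : Measurable X) (hYmeas : Measurable Y)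
    (hX : Measure.map X P = expMeasure 1)
    (hY : Measure.map Y P = gammaMeasure ((N : ℝ) - 1) 1)
    (hindep : IndepFun X Y P) :
    (β ≠ PS →
      Measure.map (fun ω => PS * X ω + β * Y ω) P =
        volume.withDensity (fun z => ENNReal.ofReal (if 0 < z then
          (1 / PS) * (1 - β / PS) ^ (1 - (N : ℤ)) * Real.exp (-(z / PS)) *
            (1 - ∑ l ∈ Finset.range (N - 1),
              ((1 / β - 1 / PS) ^ l * z ^ l / (l.factorial : ℝ)) *
                Real.exp (-((1 / β - 1 / PS) * z)))
          else 0))) ∧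
    (β = PS →
      Measure.map (fun ω => PS * X ω + β * Y ω) P = gammaMeasure (N : ℝ) (1 / PS)) := by
  set k := N - 2 with hk
  have hNk2 : N = k + 2 := by omega
  have hcast : (N:ℝ) - 1 = (k:ℝ) + 1 := by rw [hNk2]; push_cast; ring
  have hXY : Measure.map (fun ω => (X ω, Y ω)) P
      = (expMeasure 1).prod (gammaMeasure ((N:ℝ)-1) 1) := by
    rw [← hX, ← hY]
    exact (ProbabilityTheory.indepFun_iff_map_prod_eq_prod_map_map
      hXmeas.aemeasurable hYmeas.aemeasurable).mp hindep
  haveI hsf1 : SFinite (expMeasure 1) := by rw [expMeasure, gammaMeasure]; infer_instance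
  haveI hsf2 : SFinite (gammaMeasure ((N:ℝ)-1) 1) := by rw [gammaMeasure]; infer_instance
  have hconv : Measure.map (fun ω => PS * X ω + β * Y ω) P
      = volume.withDensity
          (fun z => ∫⁻ x, gammaPDF 1 (1/PS) x * gammaPDF ((k:ℝ)+1) (1/β) (z - x)) := by
    have h1 : Measure.map (fun ω => PS * X ω + β * Y ω) P
        = Measure.map ((fun p : ℝ × ℝ => p.1 + p.2) ∘ Prod.map (fun x => PS * x) (fun y => β * y))
            (Measure.map (fun ω => (X ω, Y ω)) P) := by
      rw [Measure.map_map (measurable_add.comp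
        ((measurable_const_mul PS).prodMap (measurable_const_mul β))) (hXmeas.prodMk hYmeas)]
      rfl
    rw [h1, hXY, ← Measure.map_map measurable_add
      ((measurable_const_mul PS).prodMap (measurable_const_mul β)),
      ← Measure.map_prod_map _ _ (measurable_const_mul PS) (measurable_const_mul β)]
    have hmapX : Measure.map (fun x => PS * x) (expMeasure 1) = gammaMeasure 1 (1/PS) := by
      rw [expMeasure, gammaMeasure_map_const_mul one_pos hPS, one_div]
    have hmapY : Measure.map (fun y => β * y) (gammaMeasure ((N:ℝ)-1) 1)
        = gammaMeasure ((k:ℝ)+1) (1/β) := by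
      rw [gammaMeasure_map_const_mul one_pos hβ, one_div, hcast]
    rw [hmapX, hmapY, gammaMeasure, gammaMeasure,
      map_add_prod_withDensity (measurable_gammaPDF _ _) (measurable_gammaPDF _ _)]
  have hae : ∀ᵐ (z : ℝ) ∂(volume : Measure ℝ), z ≠ 0 := by
    refine (MeasureTheory.ae_iff).mpr ?_
    simp only [ne_eq, not_not]
    have : {z : ℝ | z = 0} = {0} := by ext z; simp
    rw [this]
    exact measure_singleton 0
  constructor
  · -- case β ≠ PS
    intro hne
    have hδ : 1/β - 1/PS ≠ 0 := by
      intro h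
      apply hne
      have : 1/β = 1/PS := by linarith
      field_simp at this
      linarith
    rw [hconv]
    refine withDensity_congr_ae ?_
    filter_upwards [hae] with z hz0
    rcases lt_trichotomy z 0 with hz | hz | hz
    · rw [conv_density_neg _ _ _ hz, if_neg (by linarith), ENNReal.ofReal_zero]
    · exact absurd hz hz0
    · rw [conv_density_eval k hPS hβ hz, if_pos hz, integral_pow_mul_exp_neg k hδ z]
      congr 1
      have hrange : N - 1 = k + 1 := by omega
      rw [hrange]
      have hβPS : (1:ℝ) - β/PS ≠ 0 := by
        intro h
        apply hne
        have : β/PS = 1 := by linarith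
        field_simp at this
        linarith
      have hzpow : ((1:ℝ) - β/PS) ^ (1 - (N:ℤ)) = (((1:ℝ) - β/PS) ^ (k+1))⁻¹ := by
        have h1 : (1 - (N:ℤ)) = -((k:ℤ)+1) := by rw [hNk2]; push_cast; ring
        rw [h1, zpow_neg]
        norm_cast
      rw [hzpow]
      have hfact : ((1:ℝ) - β/PS) = β * (1/β - 1/PS) := by field_simp
      have hkf : (k.factorial : ℝ) ≠ 0 := Nat.cast_ne_zero.mpr k.factorial_ne_zero
      have hconst : (1/β)^(k+1)/(k.factorial:ℝ) * ((k.factorial:ℝ)/(1/β-1/PS)^(k+1))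
          = (((1:ℝ) - β/PS)^(k+1))⁻¹ := by
        rw [hfact, mul_pow]
        have hδk : ((1/β - 1/PS):ℝ)^(k+1) ≠ 0 := pow_ne_zero _ hδ
        have hβk : (β:ℝ)^(k+1) ≠ 0 := pow_ne_zero _ hβ.ne'
        have hPSβ : (PS - β) ≠ 0 := sub_ne_zero.mpr (Ne.symm hne)
        field_simp
        rw [← mul_pow, one_div_mul_cancel hβ.ne', one_pow]
      rw [← hconst]
      ring
  · -- case β = PS
    intro heq
    subst heq
    rw [hconv, gammaMeasure]
    refine withDensity_congr_ae ?_
    filter_upwards [hae] with z hz0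
    rcases lt_trichotomy z 0 with hz | hz | hz
    · rw [conv_density_neg _ _ _ hz, gammaPDF_of_neg hz]
    · exact absurd hz hz0
    · rw [conv_density_eval k hPS hPS hz]
      have hδ0 : (1/β - 1/β : ℝ) = 0 := by ring
      have hint : ∫ u in (0:ℝ)..z, u^k * Real.exp (-((1/β - 1/β)*u)) = z^(k+1)/((k:ℝ)+1) := by
        simp [hδ0, integral_pow]
      rw [hint, gammaPDF_of_nonneg hz.le]
      congr 1
      have h2 : ((N:ℝ)) - 1 = (((k+1:ℕ)) : ℝ) := by rw [hNk2]; push_cast; ring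
      have e1 : (1/β) ^ ((N:ℝ)) = (1/β) ^ (N:ℕ) := Real.rpow_natCast _ N
      have e2 : z ^ ((N:ℝ)-1) = z ^ (k+1 : ℕ) := by rw [h2]; exact Real.rpow_natCast _ _
      have e3 : Real.Gamma ((N:ℝ)) = ((k+1).factorial : ℝ) := by
        rw [show ((N:ℝ)) = (((k+1:ℕ)) : ℝ) + 1 by rw [hNk2]; push_cast; ring,
          Real.Gamma_nat_eq_factorial]
      rw [e1, e2, e3, hNk2, show (1/β) * z = z / β by ring]
      have hkf : (k.factorial : ℝ) ≠ 0 := Nat.cast_ne_zero.mpr k.factorial_ne_zero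
      have hkf1 : ((k+1).factorial : ℝ) = ((k:ℝ)+1) * k.factorial := by
        rw [Nat.factorial_succ]; push_cast; ring
      rw [hkf1]
      have hk1 : ((k:ℝ)+1) ≠ 0 := by positivity
      field_simp
      rw [pow_succ (1/β) (k+1), mul_left_comm, mul_one_div_cancel hβ.ne', mul_one]
end

section
/- Let α > 0, 0 < R₁ < R₂, and a_m, a_n, P_S, P_A, N > 0. Let X be an exponential random variable with rate 1 and D an independent point uniformly distributed on the closed annulus {ω ∈ ℝ² : R₁ ≤ ‖ω‖ ≤ R₂}. Set γ = a_m P_S N / (a_n P_S X + a_n P_A + 1 + ‖D‖^α), b₁ = 2 e^{(a_n P_A + 1)/(a_n P_S)}, t(x) = (a_m P_S N/x - a_n P_A - 1)^{1/α}, ζ₁ = a_m P_S N/(R₁^α + a_n P_A + 1), ζ₂ = a_m P_S N/(R₂^α + a_n P_A + 1). Then for every x > 0: P(γ ≤ x) = 1 if x ≥ ζ₁; P(γ ≤ x) = ( R₂² - t(x)² + b₁ e^{-a_m P_S N/(x a_n P_S)} ∫_{R₁}^{t(x)} r e^{r^α/(a_n P_S)} dr ) / (R₂² - R₁²) if ζ₂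 < x ≤ ζ₁; and P(γ ≤ x) = ( b₁ e^{-a_m P_S N/(x a_n P_S)} ∫_{R₁}^{R₂} r e^{r^α/(a_n P_S)} dr ) / (R₂² - R₁²) if 0 < x < ζ₂. -/
open MeasureTheory ProbabilityTheory Real Set Metric

namespace SinrAux

lemma exp_Iic (s : ℝ) :
    expMeasure 1 (Set.Iic s) = ENNReal.ofReal (if 0 ≤ s then 1 - Real.exp (-s) else 0) := by
  rw [expMeasure, gammaMeasure, withDensity_apply _ measurableSet_Iic]
  have h := lintegral_exponentialPDF_eq_antiDeriv one_pos s
  simp only [one_mul] at h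
  have hpdf : gammaPDF 1 1 = exponentialPDF 1 := rfl
  rw [hpdf, h]

lemma exp_singleton (s : ℝ) : expMeasure 1 {s} = 0 := by
  rw [expMeasure, gammaMeasure, withDensity_apply _ (measurableSet_singleton s)]
  exact setLIntegral_measure_zero _ _ (measure_singleton s)

lemma exp_Ici (s : ℝ) :
    expMeasure 1 (Set.Ici s) = ENNReal.ofReal (Real.exp (-(max s 0))) := by
  haveI := isProbabilityMeasure_expMeasure one_pos
  have hsplit : expMeasure 1 (Set.Iic s) = expMeasure 1 (Set.Iio s) + expMeasure 1 {s} := by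
    rw [← measure_union (by simp [Set.disjoint_left]; exact fun a ha => ne_of_lt ha)
      (measurableSet_singleton s), Set.Iio_union_right]
  rw [exp_singleton, add_zero, exp_Iic] at hsplit
  rw [← Set.compl_Iio, measure_compl measurableSet_Iio (measure_ne_top _ _), measure_univ,
    ← hsplit]
  split_ifs with h
  · rw [max_eq_left h]
    have hle : (0:ℝ) ≤ 1 - Real.exp (-s) :=
      sub_nonneg.mpr (Real.exp_le_one_iff.mpr (neg_nonpos.mpr h))
    refine ENNReal.sub_eq_of_eq_add ENNReal.ofReal_ne_top ?_
    rw [← ENNReal.ofReal_add (Real.exp_pos _).le hle,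
      show Real.exp (-s) + (1 - Real.exp (-s)) = 1 by ring, ENNReal.ofReal_one]
  · push_neg at h
    rw [max_eq_right h.le]
    simp

lemma exp_section (α am an PS PA N x r : ℝ) (han : 0 < an) (hPS : 0 < PS)
    (hK : 0 < an * PA + 1) (hx : 0 < x) (hr : 0 ≤ r) :
    expMeasure 1 {u : ℝ | am * PS * N / (an * PS * u + an * PA + 1 + r ^ α) ≤ x}
      = ENNReal.ofReal
        (Real.exp (-(max ((am * PS * N / x - an * PA - 1 - r ^ α) / (an * PS)) 0))) := by
  haveI := isProbabilityMeasure_expMeasure one_pos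
  have hpos : ∀ᵐ u ∂(expMeasure 1), 0 < u := by
    rw [ae_iff]
    have h0 : {u : ℝ | ¬ 0 < u} = Set.Iic 0 := by ext u; simp
    rw [h0, exp_Iic]
    simp
  have hAE : {u : ℝ | am * PS * N / (an * PS * u + an * PA + 1 + r ^ α) ≤ x}
      =ᵐ[expMeasure 1] Set.Ici ((am * PS * N / x - an * PA - 1 - r ^ α) / (an * PS)) := by
    rw [Filter.eventuallyEq_set]
    filter_upwards [hpos] with u hu
    have hrα : 0 ≤ r ^ α := Real.rpow_nonneg hr α
    have hanPS : 0 < an * PS := mul_pos han hPS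
    have hden : 0 < an * PS * u + an * PA + 1 + r ^ α := by nlinarith
    simp only [Set.mem_setOf_eq, Set.mem_Ici]
    rw [div_le_iff₀ hden, div_le_iff₀ hanPS]
    have hiff : am * PS * N ≤ x * (an * PS * u + an * PA + 1 + r ^ α) ↔
        am * PS * N / x ≤ an * PS * u + an * PA + 1 + r ^ α := by
      rw [div_le_iff₀ hx]
      constructor <;> intro h <;>
        nlinarith [mul_comm x (an * PS * u + an * PA + 1 + r ^ α)]
    rw [hiff]
    constructor
    · intro h; linarith
    · intro h; linarith
  rw [measure_congr hAE, exp_Ici]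

lemma annulus_integral (R₁ R₂ : ℝ) (h1 : 0 < R₁) (h12 : R₁ < R₂) (g : ℝ → ℝ) :
    ∫ v in (Metric.closedBall (0 : EuclideanSpace ℝ (Fin 2)) R₂ \ Metric.ball 0 R₁), g ‖v‖
      = 2 * π * ∫ r in R₁..R₂, r * g r := by
  have hA : MeasurableSet
      (Metric.closedBall (0 : EuclideanSpace ℝ (Fin 2)) R₂ \ Metric.ball 0 R₁) :=
    measurableSet_closedBall.diff measurableSet_ball
  rw [← integral_indicator hA]
  have hind : (Set.indicator (Metric.closedBall (0 : EuclideanSpace ℝ (Fin 2)) R₂ \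
        Metric.ball 0 R₁) (fun v => g ‖v‖))
      = fun v => Set.indicator (Set.Icc R₁ R₂) g ‖v‖ := by
    funext v
    have hmem : v ∈ Metric.closedBall (0 : EuclideanSpace ℝ (Fin 2)) R₂ \ Metric.ball 0 R₁
        ↔ ‖v‖ ∈ Set.Icc R₁ R₂ := by
      simp only [Set.mem_diff, Metric.mem_closedBall, Metric.mem_ball, dist_zero_right,
        Set.mem_Icc, not_lt]
      tauto
    by_cases hv : ‖v‖ ∈ Set.Icc R₁ R₂
    · rw [Set.indicator_of_mem (hmem.mpr hv), Set.indicator_of_mem hv]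
    · rw [Set.indicator_of_notMem (fun h => hv (hmem.mp h)), Set.indicator_of_notMem hv]
  rw [hind, integral_fun_norm_addHaar volume (Set.indicator (Set.Icc R₁ R₂) g)]
  have hdim : Module.finrank ℝ (EuclideanSpace ℝ (Fin 2)) = 2 := finrank_euclideanSpace_fin
  rw [hdim]
  have hball : (volume (Metric.ball (0 : EuclideanSpace ℝ (Fin 2)) 1)).toReal = π := by
    rw [EuclideanSpace.volume_ball]
    simp only [Fintype.card_fin]
    rw [show ((2:ℕ):ℝ)/2 + 1 = 2 by norm_num, Real.Gamma_two,
      Real.sq_sqrt pi_pos.le]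
    simp [ENNReal.toReal_ofReal pi_pos.le]
  rw [measureReal_def, hball]
  have hcongr : ∫ y in Set.Ioi (0:ℝ), y ^ (2-1) • (Set.indicator (Set.Icc R₁ R₂) g) y
      = ∫ r in R₁..R₂, r * g r := by
    have heq : ∀ y : ℝ, y ^ (2-1) • (Set.indicator (Set.Icc R₁ R₂) g) y
        = Set.indicator (Set.Icc R₁ R₂) (fun r => r * g r) y := by
      intro y
      by_cases hy : y ∈ Set.Icc R₁ R₂
      · rw [Set.indicator_of_mem hy, Set.indicator_of_mem hy]; simp
      · rw [Set.indicator_of_notMem hy, Set.indicator_of_notMem hy]; simp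
    rw [show (fun y => y ^ (2-1) • (Set.indicator (Set.Icc R₁ R₂) g) y)
        = Set.indicator (Set.Icc R₁ R₂) (fun r => r * g r) from funext heq]
    rw [setIntegral_indicator measurableSet_Icc]
    have hss : Set.Ioi (0:ℝ) ∩ Set.Icc R₁ R₂ = Set.Icc R₁ R₂ :=
      Set.inter_eq_self_of_subset_right (fun y hy => lt_of_lt_of_le h1 hy.1)
    rw [hss, integral_Icc_eq_integral_Ioc, ← intervalIntegral.integral_of_le h12.le]
  rw [hcongr]
  rw [nsmul_eq_mul, smul_eq_mul]
  ring
end SinrAux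

open MeasureTheory ProbabilityTheory Real

set_option maxHeartbeats 1600000 in
theorem sinr_cdf_user_m_large_antenna
    {Ω : Type*} [MeasurableSpace Ω] (P : Measure Ω) [IsProbabilityMeasure P]
    (α R₁ R₂ am an PS PA N : ℝ) (hα : 0 < α) (hR₁ : 0 < R₁) (hR₁₂ : R₁ < R₂)
    (ham : 0 < am) (han : 0 < an) (hPS : 0 < PS) (hPA : 0 < PA) (hN : 0 < N)
    (X : Ω → ℝ) (D : Ω → EuclideanSpace ℝ (Fin 2))
    (hXmeas : Measurable X) (hDmeas : Measurable D)
    (hX : Measure.map X P = expMeasure 1)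
    (hD : Measure.map D P =
      (volume (Metric.closedBall (0 : EuclideanSpace ℝ (Fin 2)) R₂ \
          Metric.ball (0 : EuclideanSpace ℝ (Fin 2)) R₁))⁻¹ •
        volume.restrict (Metric.closedBall (0 : EuclideanSpace ℝ (Fin 2)) R₂ \
          Metric.ball (0 : EuclideanSpace ℝ (Fin 2)) R₁))
    (hindep : IndepFun X D P)
    (γ : Ω → ℝ)
    (hγ : ∀ ω, γ ω = am * PS * N / (an * PS * X ω + an * PA + 1 + ‖D ω‖ ^ α))
    (b₁ : ℝ) (hb₁ : b₁ = 2 * Real.exp ((an * PA + 1) / (an * PS)))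
    (t : ℝ → ℝ) (ht : ∀ x, t x = (am * PS * N / x - an * PA - 1) ^ (1 / α))
    (ζ₁ ζ₂ : ℝ)
    (hζ₁ : ζ₁ = am * PS * N / (R₁ ^ α + an * PA + 1))
    (hζ₂ : ζ₂ = am * PS * N / (R₂ ^ α + an * PA + 1)) :
    ∀ x : ℝ, 0 < x →
      (ζ₁ ≤ x → (P {ω | γ ω ≤ x}).toReal = 1) ∧
      (ζ₂ < x → x ≤ ζ₁ →
        (P {ω | γ ω ≤ x}).toReal =
          (R₂ ^ 2 - (t x) ^ 2 +
            b₁ * Real.exp (-(am * PS * N / (x * an * PS))) *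
              ∫ r in R₁..(t x), r * Real.exp (r ^ α / (an * PS))) /
            (R₂ ^ 2 - R₁ ^ 2)) ∧
      (x < ζ₂ →
        (P {ω | γ ω ≤ x}).toReal =
          (b₁ * Real.exp (-(am * PS * N / (x * an * PS))) *
              ∫ r in R₁..R₂, r * Real.exp (r ^ α / (an * PS))) /
            (R₂ ^ 2 - R₁ ^ 2)) := by
  classical
  haveI hexp : IsProbabilityMeasure (expMeasure 1) := isProbabilityMeasure_expMeasure one_pos
  intro x hx
  have hR₂pos : (0:ℝ) < R₂ := hR₁.trans hR₁₂
  set A : Set (EuclideanSpace ℝ (Fin 2)) :=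
    Metric.closedBall 0 R₂ \ Metric.ball 0 R₁ with hA_def
  have hAmeas : MeasurableSet A := measurableSet_closedBall.diff measurableSet_ball
  have hΔpos : (0:ℝ) < R₂ ^ 2 - R₁ ^ 2 := by nlinarith
  have hπ : (0:ℝ) < π := pi_pos
  have hvolA : volume A = ENNReal.ofReal (π * (R₂ ^ 2 - R₁ ^ 2)) := by
    have hsub : Metric.ball (0 : EuclideanSpace ℝ (Fin 2)) R₁ ⊆ Metric.closedBall 0 R₂ :=
      Metric.ball_subset_closedBall.trans (Metric.closedBall_subset_closedBall hR₁₂.le)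
    rw [hA_def, measure_diff hsub measurableSet_ball.nullMeasurableSet
      measure_ball_lt_top.ne]
    rw [EuclideanSpace.volume_closedBall, EuclideanSpace.volume_ball]
    simp only [Fintype.card_fin]
    rw [show ((2:ℕ):ℝ)/2 + 1 = 2 by norm_num, Real.Gamma_two, Real.sq_sqrt pi_pos.le]
    rw [div_one, ← ENNReal.ofReal_pow hR₂pos.le, ← ENNReal.ofReal_pow hR₁.le,
      ← ENNReal.ofReal_mul (by positivity), ← ENNReal.ofReal_mul (by positivity),
      ← ENNReal.ofReal_sub _ (by positivity)]
    congr 1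
    ring
  have hvolA_ne0 : volume A ≠ 0 := by
    rw [hvolA]
    exact (ENNReal.ofReal_pos.2 (by positivity)).ne'
  have hvolA_netop : volume A ≠ ⊤ := by rw [hvolA]; exact ENNReal.ofReal_ne_top
  set ν : Measure (EuclideanSpace ℝ (Fin 2)) := (volume A)⁻¹ • volume.restrict A with hν
  haveI hνprob : IsProbabilityMeasure ν :=
    ⟨by rw [hν, Measure.smul_apply, Measure.restrict_apply_univ, smul_eq_mul,
      ENNReal.inv_mul_cancel hvolA_ne0 hvolA_netop]⟩
  have hKpos : (0:ℝ) < an * PA + 1 := by positivity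
  set Sx : Set (EuclideanSpace ℝ (Fin 2) × ℝ) :=
    {p | am * PS * N / (an * PS * p.2 + an * PA + 1 + ‖p.1‖ ^ α) ≤ x} with hSx_def
  have hden_meas : Measurable fun p : EuclideanSpace ℝ (Fin 2) × ℝ =>
      an * PS * p.2 + an * PA + 1 + ‖p.1‖ ^ α := by
    have h1 : Measurable fun p : EuclideanSpace ℝ (Fin 2) × ℝ => ‖p.1‖ ^ α :=
      (Real.continuous_rpow_const hα.le).measurable.comp measurable_fst.norm
    exact (((measurable_const.mul measurable_snd).add_const (an * PA)).add_const 1).add h1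
  have hSxmeas : MeasurableSet Sx :=
    measurableSet_le (measurable_const.div hden_meas) measurable_const
  have hset : {ω | γ ω ≤ x} = (fun ω => (D ω, X ω)) ⁻¹' Sx := by
    ext ω
    simp only [Set.mem_setOf_eq, hSx_def, Set.mem_preimage, hγ ω]
  have hmap : Measure.map (fun ω => (D ω, X ω)) P = ν.prod (expMeasure 1) := by
    rw [← hX, ← hD]
    exact (indepFun_iff_map_prod_eq_prod_map_map hDmeas.aemeasurable
      hXmeas.aemeasurable).mp hindep.symm
  have hPeq : P {ω | γ ω ≤ x} = (ν.prod (expMeasure 1)) Sx := by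
    rw [hset, ← Measure.map_apply (hDmeas.prodMk hXmeas) hSxmeas, hmap]
  set gG : ℝ → ℝ :=
    fun r => Real.exp (-(max ((am * PS * N / x - an * PA - 1 - r ^ α) / (an * PS)) 0))
    with hgG
  have hsect : ∀ v : EuclideanSpace ℝ (Fin 2),
      expMeasure 1 (Prod.mk v ⁻¹' Sx) = ENNReal.ofReal (gG ‖v‖) := fun v =>
    SinrAux.exp_section α am an PS PA N x ‖v‖ han hPS hKpos hx (norm_nonneg v)
  have hgG_cont : Continuous gG :=
    Real.continuous_exp.comp ((((continuous_const.sub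
      (Real.continuous_rpow_const hα.le)).div_const _).max continuous_const).neg)
  have hgG_nonneg : ∀ r, 0 ≤ gG r := fun r => (Real.exp_pos _).le
  have hgG_le_one : ∀ r, gG r ≤ 1 := fun r =>
    Real.exp_le_one_iff.mpr (neg_nonpos.mpr (le_max_right _ _))
  have hInt : Integrable (fun v => gG ‖v‖) ν :=
    (integrable_const (1:ℝ)).mono' (hgG_cont.comp continuous_norm).aestronglyMeasurable
      (Filter.Eventually.of_forall fun v => by
        rw [Real.norm_eq_abs, abs_of_nonneg (hgG_nonneg _)]
        simpa using hgG_le_one ‖v‖)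
  have key : (P {ω | γ ω ≤ x}).toReal
      = 2 / (R₂ ^ 2 - R₁ ^ 2) * ∫ r in R₁..R₂, r * gG r := by
    calc (P {ω | γ ω ≤ x}).toReal = (∫⁻ v, ENNReal.ofReal (gG ‖v‖) ∂ν).toReal := by
          rw [hPeq, Measure.prod_apply hSxmeas]
          congr 1
          exact lintegral_congr fun v => hsect v
      _ = ∫ v, gG ‖v‖ ∂ν := by
          rw [← ofReal_integral_eq_lintegral_ofReal hInt
            (Filter.Eventually.of_forall fun v => hgG_nonneg _),
            ENNReal.toReal_ofReal (integral_nonneg fun v => hgG_nonneg _)]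
      _ = (volume A)⁻¹.toReal * ∫ v in A, gG ‖v‖ := by
          rw [hν, integral_smul_measure, smul_eq_mul]
      _ = (π * (R₂ ^ 2 - R₁ ^ 2))⁻¹ * (2 * π * ∫ r in R₁..R₂, r * gG r) := by
          rw [hA_def, SinrAux.annulus_integral R₁ R₂ hR₁ hR₁₂ gG, hvolA,
            ← ENNReal.ofReal_inv_of_pos (by positivity),
            ENNReal.toReal_ofReal (by positivity)]
      _ = 2 / (R₂ ^ 2 - R₁ ^ 2) * ∫ r in R₁..R₂, r * gG r := by
          field_simp
  have hbb : b₁ * Real.exp (-(am * PS * N / (x * an * PS)))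
      = 2 * Real.exp (-((am * PS * N / x - an * PA - 1) / (an * PS))) := by
    rw [hb₁, mul_assoc, ← Real.exp_add]
    congr 1
    field_simp
    ring
  have hIntInterval : ∀ a b : ℝ, IntervalIntegrable (fun r => r * gG r) volume a b :=
    fun a b => (continuous_id.mul hgG_cont).intervalIntegrable a b
  refine ⟨?_, ?_, ?_⟩
  · -- case ζ₁ ≤ x
    intro h1
    have hR₁α : (0:ℝ) < R₁ ^ α := Real.rpow_pos_of_pos hR₁ α
    have hcle : am * PS * N / x - an * PA - 1 ≤ R₁ ^ α := by
      rw [hζ₁, div_le_iff₀ (by linarith : (0:ℝ) < R₁ ^ α + an * PA + 1)] at h1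
      have h3 : am * PS * N / x ≤ R₁ ^ α + an * PA + 1 := by
        rw [div_le_iff₀ hx]
        nlinarith [mul_comm x (R₁ ^ α + an * PA + 1)]
      linarith
    rw [key]
    have hint : ∫ r in R₁..R₂, r * gG r = ∫ r in R₁..R₂, r := by
      apply intervalIntegral.integral_congr
      intro r hr
      rw [Set.uIcc_of_le hR₁₂.le] at hr
      have h4 : R₁ ^ α ≤ r ^ α := Real.rpow_le_rpow hR₁.le hr.1 hα.le
      have h5 : (am * PS * N / x - an * PA - 1 - r ^ α) / (an * PS) ≤ 0 :=
        div_nonpos_of_nonpos_of_nonneg (by linarith) (by positivity)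
      show r * gG r = r
      rw [hgG]
      simp only [max_eq_right h5, neg_zero, Real.exp_zero, mul_one]
    rw [hint, integral_id]
    field_simp
  · -- middle case
    intro h2a h2b
    set c : ℝ := am * PS * N / x - an * PA - 1 with hc_def
    have hR₂α : (0:ℝ) < R₂ ^ α := Real.rpow_pos_of_pos hR₂pos α
    have hR₁α : (0:ℝ) < R₁ ^ α := Real.rpow_pos_of_pos hR₁ α
    have hc1 : R₁ ^ α ≤ c := by
      rw [hζ₁, le_div_iff₀ (by linarith : (0:ℝ) < R₁ ^ α + an * PA + 1)] at h2b
      have h3 : R₁ ^ α + an * PA + 1 ≤ am * PS * N / x := by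
        rw [le_div_iff₀ hx]
        nlinarith [mul_comm x (R₁ ^ α + an * PA + 1)]
      rw [hc_def]; linarith
    have hc2 : c < R₂ ^ α := by
      rw [hζ₂, div_lt_iff₀ (by linarith : (0:ℝ) < R₂ ^ α + an * PA + 1)] at h2a
      have h3 : am * PS * N / x < R₂ ^ α + an * PA + 1 := by
        rw [div_lt_iff₀ hx]
        nlinarith [mul_comm x (R₂ ^ α + an * PA + 1)]
      rw [hc_def]; linarith
    have hcpos : (0:ℝ) < c := lt_of_lt_of_le hR₁α hc1
    have htx : t x = c ^ (1/α) := by rw [ht x, hc_def]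
    have hα' : (1/α) * α = 1 := by field_simp
    have htα : t x ^ α = c := by
      rw [htx, ← Real.rpow_mul hcpos.le, one_div_mul_cancel hα.ne', Real.rpow_one]
    have ht1 : R₁ ≤ t x := by
      have e1 : (R₁ ^ α) ^ (1/α) = R₁ := by
        rw [← Real.rpow_mul hR₁.le, mul_one_div_cancel hα.ne', Real.rpow_one]
      calc R₁ = (R₁ ^ α) ^ (1/α) := e1.symm
        _ ≤ c ^ (1/α) := Real.rpow_le_rpow hR₁α.le hc1 (by positivity)
        _ = t x := htx.symm
    have ht2 : t x ≤ R₂ := by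
      have e1 : (R₂ ^ α) ^ (1/α) = R₂ := by
        rw [← Real.rpow_mul hR₂pos.le, mul_one_div_cancel hα.ne', Real.rpow_one]
      calc t x = c ^ (1/α) := htx
        _ ≤ (R₂ ^ α) ^ (1/α) := Real.rpow_le_rpow hcpos.le hc2.le (by positivity)
        _ = R₂ := e1
    have htpos : (0:ℝ) < t x := lt_of_lt_of_le hR₁ ht1
    have hsplit : ∫ r in R₁..R₂, r * gG r
        = (∫ r in R₁..t x, r * gG r) + ∫ r in t x..R₂, r * gG r :=
      (intervalIntegral.integral_add_adjacent_intervals (hIntInterval _ _)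
        (hIntInterval _ _)).symm
    have hI2 : ∫ r in t x..R₂, r * gG r = (R₂ ^ 2 - t x ^ 2) / 2 := by
      have hcongr : ∫ r in t x..R₂, r * gG r = ∫ r in t x..R₂, r := by
        apply intervalIntegral.integral_congr
        intro r hr
        rw [Set.uIcc_of_le ht2] at hr
        have h4 : c ≤ r ^ α := by
          rw [← htα]; exact Real.rpow_le_rpow htpos.le hr.1 hα.le
        have h5 : (am * PS * N / x - an * PA - 1 - r ^ α) / (an * PS) ≤ 0 :=
          div_nonpos_of_nonpos_of_nonneg (by rw [← hc_def]; linarith) (by positivity)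
        show r * gG r = r
        rw [hgG]
        rw [← hc_def] at h5
        simp only [max_eq_right h5, neg_zero, Real.exp_zero, mul_one]
      rw [hcongr, integral_id]
    have hI1 : ∫ r in R₁..t x, r * gG r
        = Real.exp (-(c / (an * PS))) * ∫ r in R₁..t x, r * Real.exp (r ^ α / (an * PS)) := by
      rw [← intervalIntegral.integral_const_mul]
      apply intervalIntegral.integral_congr
      intro r hr
      rw [Set.uIcc_of_le ht1] at hr
      have h4 : r ^ α ≤ c := by
        rw [← htα]; exact Real.rpow_le_rpow (hR₁.le.trans hr.1) hr.2 hα.le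
      have h5 : 0 ≤ (am * PS * N / x - an * PA - 1 - r ^ α) / (an * PS) :=
        div_nonneg (by rw [← hc_def]; linarith) (by positivity)
      show r * gG r = Real.exp (-(c / (an * PS))) * (r * Real.exp (r ^ α / (an * PS)))
      rw [hgG]
      rw [← hc_def] at h5
      simp only [max_eq_left h5]
      rw [show -((c - r ^ α) / (an * PS))
          = -(c / (an * PS)) + r ^ α / (an * PS) by ring, Real.exp_add]
      ring
    rw [key, hsplit, hI1, hI2, hbb]
    rw [show -((am * PS * N / x - an * PA - 1) / (an * PS)) = -(c / (an * PS)) by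
      rw [hc_def]]
    field_simp
    ring
  · -- case x < ζ₂
    intro h3
    set c : ℝ := am * PS * N / x - an * PA - 1 with hc_def
    have hR₂α : (0:ℝ) < R₂ ^ α := Real.rpow_pos_of_pos hR₂pos α
    have hc3 : R₂ ^ α < c := by
      rw [hζ₂, lt_div_iff₀ (by linarith : (0:ℝ) < R₂ ^ α + an * PA + 1)] at h3
      have h4 : R₂ ^ α + an * PA + 1 < am * PS * N / x := by
        rw [lt_div_iff₀ hx]
        nlinarith [mul_comm x (R₂ ^ α + an * PA + 1)]
      rw [hc_def]; linarith
    have hint : ∫ r in R₁..R₂, r * gG r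
        = Real.exp (-(c / (an * PS))) * ∫ r in R₁..R₂, r * Real.exp (r ^ α / (an * PS)) := by
      rw [← intervalIntegral.integral_const_mul]
      apply intervalIntegral.integral_congr
      intro r hr
      rw [Set.uIcc_of_le hR₁₂.le] at hr
      have h4 : r ^ α ≤ R₂ ^ α := Real.rpow_le_rpow (hR₁.le.trans hr.1) hr.2 hα.le
      have h5 : 0 ≤ (am * PS * N / x - an * PA - 1 - r ^ α) / (an * PS) :=
        div_nonneg (by rw [← hc_def]; linarith) (by positivity)
      show r * gG r = Real.exp (-(c / (an * PS))) * (r * Real.exp (r ^ α / (an * PS)))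
      rw [hgG]
      rw [← hc_def] at h5
      simp only [max_eq_left h5]
      rw [show -((c - r ^ α) / (an * PS))
          = -(c / (an * PS)) + r ^ α / (an * PS) by ring, Real.exp_add]
      ring
    rw [key, hint, hbb]
    rw [show -((am * PS * N / x - an * PA - 1) / (an * PS)) = -(c / (an * PS)) by
      rw [hc_def]]
    field_simp
end

section
/- Let m ≥ 1 be an integer and τ₁, τ₂ > 0 with τ₁ ≠ τ₂; set L = τ₁ + τ₂. Then for every z > 0, the convolution of the two Gamma(m, τᵢ) densities satisfies ∫_0^z ( τ₁^m t^{m-1} e^{-τ₁ t}/(m-1)! ) · ( τ₂^m (z-t)^{m-1} e^{-τ₂ (z-t)}/(m-1)! ) dt = (-1)^m (τ₁ τ₂)^m ∑_{i=1}^{2} ∑_{j=1}^{m} ( C(2m-j-1, m-j) / (j-1)! ) (2τᵢ - L)^{j - 2m} z^{j-1} e^{-τᵢ z}. Equivalently, the sum of two independent Gamma random variables with common shape m and distinct rates τ₁, τ₂ has this function as its density on (0,∞). -/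
/-!
With `m = n + 1` and `δ = τ₁ - τ₂`, the convolution is `exp (-τ₂ z)` times
`∫₀^z p(t) e^{-δ t} dt` for the polynomial `p = t^n (z - t)^n`. Repeated integration by parts
evaluates such an integral through the iterated derivatives of `p` at the two endpoints, i.e. its
Taylor coefficients at `0` and at `z`. Both vanish below degree `n` and are binomial above it; the
endpoint `0` gives the `exp (-τ₂ z)` term and the endpoint `z` the `exp (-τ₁ z)` term.
-/

open Real Finset Polynomial
open scoped Nat

namespace Polynomial

variable {R : Type*}

theorem sum_range_add_mul_coeff_X_pow_mul [Semiring R] (q : R[X]) (f : ℕ → R) (n N : ℕ) :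
    ∑ k ∈ range (n + N), f k * (X ^ n * q).coeff k = ∑ i ∈ range N, f (n + i) * q.coeff i := by
  rw [sum_range_add, sum_eq_zero fun k hk => ?_, zero_add]
  · simp only [coeff_X_pow_mul', if_pos (Nat.le_add_right n _), Nat.add_sub_cancel_left]
  · rw [coeff_X_pow_mul', if_neg (by simpa using hk), mul_zero]

theorem coeff_C_sub_X_pow [CommRing R] (z : R) (n i : ℕ) :
    ((C z - X) ^ n).coeff i = (-1) ^ i * n.choose i * z ^ (n - i) := by
  rw [show C z - X = -(X + C (-z)) by simp; ring, neg_pow, ← C_1, ← C_neg, ← C_pow, coeff_C_mul,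
    coeff_X_add_C_pow]
  rcases le_or_gt i n with hi | hi
  · obtain ⟨k, rfl⟩ := Nat.exists_eq_add_of_le hi
    rw [Nat.add_sub_cancel_left, neg_pow, pow_add]
    ring_nf
    simp [pow_mul']
  · simp [Nat.choose_eq_zero_of_lt hi]

theorem taylor_X_pow_mul_C_sub_X_pow [CommRing R] (z : R) (n : ℕ) :
    taylor z (X ^ n * (C z - X) ^ n) = X ^ n * (C ((-1) ^ n) * (X + C z) ^ n) := by
  simp only [taylor_mul, taylor_pow, taylor_X, map_sub, taylor_C, map_pow, map_neg, map_one]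
  ring

theorem eval_iterate_derivative_eq_factorial_mul_coeff_taylor [CommSemiring R] (p : R[X])
    (k : ℕ) (r : R) :
    (derivative^[k] p).eval r = k ! * (taylor r p).coeff k := by
  rw [taylor_coeff, ← factorial_smul_hasseDeriv]
  simp [nsmul_eq_mul]

theorem hasDerivAt_neg_exp_mul_sum_iterate_derivative (p : ℝ[X]) {δ : ℝ} (hδ : δ ≠ 0)
    {N : ℕ} (hN : p.natDegree < N) (t : ℝ) :
    HasDerivAt (fun t => -(exp (-(δ * t)) *
        ∑ k ∈ range N, (derivative^[k] p).eval t / δ ^ (k + 1)))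
      (p.eval t * exp (-(δ * t))) t := by
  have hexp : HasDerivAt (fun t => exp (-(δ * t))) (-δ * exp (-(δ * t))) t := by
    simpa [mul_comm] using ((hasDerivAt_id t).const_mul δ).neg.exp
  have hsum : HasDerivAt (fun t => ∑ k ∈ range N, (derivative^[k] p).eval t / δ ^ (k + 1))
      (∑ k ∈ range N, (derivative^[k + 1] p).eval t / δ ^ (k + 1)) t := by
    refine HasDerivAt.fun_sum fun k _ => ?_
    rw [Function.iterate_succ_apply']
    exact ((derivative^[k] p).hasDerivAt t).div_const _
  have htelescope : δ * ∑ k ∈ range N, (derivative^[k] p).eval t / δ ^ (k + 1)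
      - ∑ k ∈ range N, (derivative^[k + 1] p).eval t / δ ^ (k + 1) = p.eval t := by
    rw [mul_sum, ← sum_sub_distrib]
    have hsub := sum_range_sub' (fun k => (derivative^[k] p).eval t / δ ^ k) N
    simp only [iterate_derivative_eq_zero hN, eval_zero, zero_div, sub_zero,
      Function.iterate_zero_apply, pow_zero, div_one] at hsub
    rw [← hsub]
    refine sum_congr rfl fun k _ => ?_
    field_simp
    ring
  refine (hexp.mul hsum).neg.congr_deriv ?_
  rw [← htelescope]
  ring

theorem integral_eval_mul_exp_neg (p : ℝ[X]) {δ : ℝ} (hδ : δ ≠ 0) {N : ℕ}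
    (hN : p.natDegree < N) (a b : ℝ) :
    ∫ t in a..b, p.eval t * exp (-(δ * t)) =
      exp (-(δ * a)) * ∑ k ∈ range N, (derivative^[k] p).eval a / δ ^ (k + 1)
        - exp (-(δ * b)) * ∑ k ∈ range N, (derivative^[k] p).eval b / δ ^ (k + 1) := by
  rw [intervalIntegral.integral_eq_sub_of_hasDerivAt
    (fun t _ => p.hasDerivAt_neg_exp_mul_sum_iterate_derivative hδ hN t)
    ((by fun_prop : Continuous fun t => p.eval t * exp (-(δ * t))).intervalIntegrable a b)]
  ring

end Polynomial

theorem Nat.factorial_add_mul_choose_mul_factorial_sub {n i : ℕ} (hi : i ≤ n) :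
    (n + i)! * n.choose i * (n - i)! = n ! * n ! * (n + i).choose i := by
  rw [← Nat.add_choose_mul_factorial_mul_factorial n i, ← Nat.choose_mul_factorial_mul_factorial hi]
  ring

theorem integral_pow_mul_sub_pow_mul_exp_neg (n : ℕ) {δ : ℝ} (hδ : δ ≠ 0) (z : ℝ) :
    ∫ t in (0 : ℝ)..z, t ^ n * (z - t) ^ n * exp (-(δ * t)) =
      (n ! : ℝ) ^ 2 * ∑ i ∈ range (n + 1), ((n + i).choose i : ℝ) / ((n - i)! : ℝ) *
        z ^ (n - i) / δ ^ (n + i + 1) * ((-1) ^ i - (-1) ^ n * exp (-(δ * z))) := by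
  set p : ℝ[X] := X ^ n * (C z - X) ^ n
  have hp : ∀ t, t ^ n * (z - t) ^ n = p.eval t := by simp [p]
  have hdeg : p.natDegree < n + (n + 1) := by
    simp only [p]
    compute_degree
    omega
  simp only [hp]
  rw [p.integral_eval_mul_exp_neg hδ hdeg 0 z]
  simp only [eval_iterate_derivative_eq_factorial_mul_coeff_taylor, taylor_zero, mul_zero,
    neg_zero, exp_zero, one_mul, mul_div_right_comm _ (coeff _ _)]
  rw [sum_range_add_mul_coeff_X_pow_mul, taylor_X_pow_mul_C_sub_X_pow,
    sum_range_add_mul_coeff_X_pow_mul, mul_sum, mul_sum, ← sum_sub_distrib]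
  refine sum_congr rfl fun i hi => ?_
  have hfact := congrArg (Nat.cast : ℕ → ℝ)
    (Nat.factorial_add_mul_choose_mul_factorial_sub (Nat.lt_succ_iff.mp (mem_range.mp hi)))
  push_cast at hfact
  rw [coeff_C_sub_X_pow, coeff_C_mul, coeff_X_add_C_pow]
  field_simp
  linear_combination (z ^ (n - i) * ((-1) ^ i - (-1) ^ n * exp (-(δ * z)))) * hfact

theorem gamma_density_mul_gamma_density (n : ℕ) (τ₁ τ₂ z t : ℝ) :
    (τ₁ ^ (n + 1) * t ^ n * exp (-(τ₁ * t)) / (n ! : ℝ)) *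
        (τ₂ ^ (n + 1) * (z - t) ^ n * exp (-(τ₂ * (z - t))) / (n ! : ℝ)) =
      (τ₁ * τ₂) ^ (n + 1) / (n ! : ℝ) ^ 2 * exp (-(τ₂ * z)) *
        (t ^ n * (z - t) ^ n * exp (-((τ₁ - τ₂) * t))) := by
  have hexp : exp (-(τ₁ * t)) * exp (-(τ₂ * (z - t))) =
      exp (-(τ₂ * z)) * exp (-((τ₁ - τ₂) * t)) := by
    rw [← exp_add, ← exp_add]; ring_nf
  linear_combination (τ₁ * τ₂) ^ (n + 1) * t ^ n * (z - t) ^ n / (n ! : ℝ) ^ 2 * hexp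

theorem sum_Icc_choose_mul_zpow_eq_sum_range (n : ℕ) (x z : ℝ) :
    ∑ j ∈ Icc 1 (n + 1), ((2 * (n + 1) - j - 1).choose (n + 1 - j) : ℝ) / ((j - 1)! : ℝ) *
        x ^ ((j : ℤ) - 2 * ((n + 1 : ℕ) : ℤ)) * z ^ (j - 1) =
      ∑ i ∈ range (n + 1),
        ((n + i).choose i : ℝ) / ((n - i)! : ℝ) * z ^ (n - i) / x ^ (n + i + 1) := by
  refine sum_nbij' (fun j => n + 1 - j) (fun i => n + 1 - i) (by simp; omega) (by simp; omega)
    (by simp; omega) (by simp; omega) fun j hj => ?_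
  obtain ⟨-, hjn⟩ := mem_Icc.mp hj
  have hexp : (j : ℤ) - 2 * ((n + 1 : ℕ) : ℤ) = -((n + (n + 1 - j) + 1 : ℕ) : ℤ) := by
    push_cast [Nat.cast_sub hjn]; ring
  rw [hexp, zpow_neg, zpow_natCast, show 2 * (n + 1) - j - 1 = n + (n + 1 - j) by omega,
    show n - (n + 1 - j) = j - 1 by omega, div_eq_mul_inv _ (x ^ _)]
  ring

theorem gamma_convolution_distinct_rates_general (m : ℕ) (hm : 1 ≤ m)
    (τ₁ τ₂ : ℝ) (hne : τ₁ ≠ τ₂)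
    (L : ℝ) (hL : L = τ₁ + τ₂) :
    ∀ z : ℝ, 0 < z →
      ∫ t in (0 : ℝ)..z,
          (τ₁ ^ m * t ^ (m - 1) * Real.exp (-(τ₁ * t)) / ((m - 1).factorial : ℝ)) *
          (τ₂ ^ m * (z - t) ^ (m - 1) * Real.exp (-(τ₂ * (z - t))) / ((m - 1).factorial : ℝ)) =
        (-1 : ℝ) ^ m * (τ₁ * τ₂) ^ m *
          ∑ τ ∈ ({τ₁, τ₂} : Finset ℝ), ∑ j ∈ Finset.Icc 1 m,
            (((2 * m - j - 1).choose (m - j) : ℝ) / ((j - 1).factorial : ℝ)) *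
              (2 * τ - L) ^ ((j : ℤ) - 2 * (m : ℤ)) * z ^ (j - 1) * Real.exp (-(τ * z)) := by
  intro z _
  obtain ⟨n, rfl⟩ : ∃ n, m = n + 1 := ⟨m - 1, by omega⟩
  have hδ : τ₁ - τ₂ ≠ 0 := sub_ne_zero.mpr hne
  have hexp : exp (-(τ₁ * z)) = exp (-(τ₂ * z)) * exp (-((τ₁ - τ₂) * z)) := by
    rw [← exp_add]; ring_nf
  simp only [Nat.add_sub_cancel, gamma_density_mul_gamma_density]
  rw [intervalIntegral.integral_const_mul, integral_pow_mul_sub_pow_mul_exp_neg n hδ,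
    sum_pair hne, ← sum_mul, ← sum_mul, hL, show 2 * τ₁ - (τ₁ + τ₂) = τ₁ - τ₂ by ring,
    show 2 * τ₂ - (τ₁ + τ₂) = -(τ₁ - τ₂) by ring, sum_Icc_choose_mul_zpow_eq_sum_range,
    sum_Icc_choose_mul_zpow_eq_sum_range, hexp, sum_mul, sum_mul, ← sum_add_distrib, mul_sum,
    mul_sum, mul_sum]
  refine sum_congr rfl fun i _ => ?_
  have hsign : (-1 : ℝ) ^ i * (-1) ^ (n + i + 1) = (-1) ^ (n + 1) := by
    rw [← pow_add, show i + (n + i + 1) = n + 1 + 2 * i by ring, pow_add, pow_mul]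
    norm_num
  rw [neg_pow (τ₁ - τ₂)]
  field_simp
  linear_combination (τ₁ * τ₂) ^ (n + 1) * ((n + i).choose i : ℝ) * hsign

theorem gamma_convolution_distinct_rates (m : ℕ) (hm : 1 ≤ m)
    (τ₁ τ₂ : ℝ) (hτ₁ : 0 < τ₁) (hτ₂ : 0 < τ₂) (hne : τ₁ ≠ τ₂)
    (L : ℝ) (hL : L = τ₁ + τ₂) :
    ∀ z : ℝ, 0 < z →
      ∫ t in (0 : ℝ)..z,
          (τ₁ ^ m * t ^ (m - 1) * Real.exp (-(τ₁ * t)) / ((m - 1).factorial : ℝ)) *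
          (τ₂ ^ m * (z - t) ^ (m - 1) * Real.exp (-(τ₂ * (z - t))) / ((m - 1).factorial : ℝ)) =
        (-1 : ℝ) ^ m * (τ₁ * τ₂) ^ m *
          ∑ τ ∈ ({τ₁, τ₂} : Finset ℝ), ∑ j ∈ Finset.Icc 1 m,
            (((2 * m - j - 1).choose (m - j) : ℝ) / ((j - 1).factorial : ℝ)) *
              (2 * τ - L) ^ ((j : ℤ) - 2 * (m : ℤ)) * z ^ (j - 1) * Real.exp (-(τ * z)) :=
  gamma_convolution_distinct_rates_general m hm τ₁ τ₂ hne L hL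
end

section
/- Let α > 0, δ = 2/α, R > 0, μ₁ > 0, μ₂ > 0, a_n ∈ (0,1), R_n > 0, and integers 1 ≤ n ≤ M. Define F(y) = (2/R²) ∫_0^R (1 - e^{-(1+r^α) y}) r dr, F_{(n)}(y) = ∑_{k=n}^{M} C(M,k) F(y)^k (1-F(y))^{M-k}, ℓ = 1 + 2R^α/(α+2), φ_n = M!/((M-n)!(n-1)!), and the eavesdropper density f(x) = μ₁ e^{ -μ₁ Γ(δ, μ₂ x)/x^δ } ( μ₂^δ e^{-μ₂ x}/x + δ Γ(δ, μ₂ x)/x^{δ+1} ) for x > 0, where Γ(s,u) = ∫_u^∞ t^{s-1} e^{-t} dt. Assume Q = ∫_0^∞ f(x) (2^{R_n}(1+x) - 1)^n dx < ∞. Then lim_{ρ → ∞} ρ^n ∫_0^∞ f(x) F_{(n)}( (2^{R_n}(1+x) - 1)/(ρ a_n) ) dx = (φ_n ℓ^n / (n a_n^n)) · Q. -/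
/-!
From `u - u² ≤ 1 - e^(-u) ≤ u`, averaged over the disc, the gain CDF satisfies
`ℓ y - (1 + R^α)² y² ≤ F y ≤ ℓ y`, so `F y ~ ℓ y` as `y → 0⁺`. In the binomial sum for `F_(n)` the
term `k = n` then dominates, `F_(n) y ~ C(M, n) ℓⁿ yⁿ`, and `F_(n) y ≤ 2^M ℓⁿ yⁿ` bounds
`ρⁿ F_(n)(c(x) / (ρ aₙ))` by a multiple of `|f x| c(x)ⁿ`. Dominated convergence gives the limit
`C(M, n) ℓⁿ Q / aₙⁿ`, and `n C(M, n) = φₙ`.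
-/

open MeasureTheory Filter Real Finset

/-- Upper incomplete gamma function `Γ(s, u) = ∫_u^∞ t^(s-1) e^(-t) dt`. -/
noncomputable def upperIncGamma (s u : ℝ) : ℝ :=
  ∫ t in Set.Ioi u, t ^ (s - 1) * Real.exp (-t)

open Topology

/-- `2 r / R²` is the density of the distance to the centre of a uniform point of the disc of
radius `R`, so this is the mean of `g (|z|)` over that disc. -/
noncomputable def discAverage (R : ℝ) (g : ℝ → ℝ) : ℝ :=
  2 / R ^ 2 * ∫ r in (0 : ℝ)..R, g r * r

section discAverage

variable {R : ℝ} {g h : ℝ → ℝ}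

theorem discAverage_const (hR : R ≠ 0) (c : ℝ) : discAverage R (fun _ => c) = c := by
  rw [discAverage, intervalIntegral.integral_const_mul, integral_id]
  field_simp
  ring

theorem discAverage_mul_const (g : ℝ → ℝ) (c : ℝ) :
    discAverage R (fun r => g r * c) = discAverage R g * c := by
  simp only [discAverage, mul_right_comm _ c, intervalIntegral.integral_mul_const]
  ring

theorem discAverage_sub_const (hR : R ≠ 0) (hg : Continuous g) (c : ℝ) :
    discAverage R (fun r => g r - c) = discAverage R g - c := by
  have hgr : IntervalIntegrable (fun r => g r * r) volume 0 R :=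
    (hg.mul continuous_id).intervalIntegrable _ _
  have hcr : IntervalIntegrable (fun r => c * r) volume 0 R :=
    (continuous_const.mul continuous_id).intervalIntegrable _ _
  simp only [discAverage, sub_mul, intervalIntegral.integral_sub hgr hcr, mul_sub]
  rw [← discAverage, ← discAverage, discAverage_const hR]

theorem discAverage_mono (hR : 0 ≤ R) (hg : Continuous g) (hh : Continuous h)
    (hgh : ∀ r ∈ Set.Icc 0 R, g r ≤ h r) : discAverage R g ≤ discAverage R h := by
  refine mul_le_mul_of_nonneg_left ?_ (by positivity)
  refine intervalIntegral.integral_mono_on hR ((hg.mul continuous_id).intervalIntegrable _ _)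
    ((hh.mul continuous_id).intervalIntegrable _ _) fun r hr => ?_
  exact mul_le_mul_of_nonneg_right (hgh r hr) hr.1

theorem discAverage_one_add_rpow {α : ℝ} (hα : 0 ≤ α) (hR : 0 < R) :
    discAverage R (fun r => 1 + r ^ α) = 1 + 2 * R ^ α / (α + 2) := by
  have hsplit : ∀ r ∈ Set.uIcc 0 R, (1 + r ^ α) * r = r + r ^ (α + 1) := by
    intro r hr
    rw [Set.uIcc_of_le hR.le] at hr
    rw [add_mul, one_mul, rpow_add_one' hr.1 (by linarith)]
  have hR2 : R ^ (α + 1 + 1) = R ^ α * R ^ 2 := by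
    rw [add_assoc, one_add_one_eq_two, rpow_add hR, rpow_two]
  rw [discAverage, intervalIntegral.integral_congr hsplit,
    intervalIntegral.integral_add (intervalIntegral.intervalIntegrable_id (a := 0) (b := R))
      ((continuous_rpow_const (by linarith)).intervalIntegrable _ _),
    integral_id, integral_rpow (Or.inl (by linarith)),
    zero_rpow (by linarith), hR2]
  field_simp
  ring

end discAverage

/-- CDF of `|h|² / (1 + d ^ α)` for Rayleigh fading `h` and the distance `d` of a uniform point of
the disc of radius `R`. -/
noncomputable def discGainCDF (α R y : ℝ) : ℝ :=
  discAverage R (fun r => 1 - exp (-((1 + r ^ α) * y)))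

theorem sub_sq_le_one_sub_exp_neg {u : ℝ} (hu : 0 ≤ u) : u - u ^ 2 ≤ 1 - exp (-u) := by
  have hexp : exp (-u) ≤ (1 + u)⁻¹ := by
    rw [exp_neg]
    exact inv_anti₀ (by positivity) (by linarith [add_one_le_exp u])
  have hinv : u - u ^ 2 ≤ 1 - (1 + u)⁻¹ := by
    rw [← one_div, one_sub_div (by linarith), le_div_iff₀ (by linarith)]
    nlinarith
  linarith

section discGainCDF

variable {α R : ℝ}

theorem discGainCDF_mono (hα : 0 ≤ α) (hR : 0 ≤ R) : Monotone (discGainCDF α R) := by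
  intro y₁ y₂ hy
  refine discAverage_mono hR (by fun_prop (disch := assumption))
    (by fun_prop (disch := assumption)) fun r hr => ?_
  have : 0 ≤ 1 + r ^ α := by linarith [rpow_nonneg hr.1 α]
  gcongr

theorem discGainCDF_nonneg (hα : 0 ≤ α) (hR : 0 < R) {y : ℝ} (hy : 0 ≤ y) :
    0 ≤ discGainCDF α R y := by
  calc 0 = discGainCDF α R 0 := by simp [discGainCDF, discAverage_const hR.ne']
    _ ≤ discGainCDF α R y := discGainCDF_mono hα hR.le hy

theorem discGainCDF_le_one (hα : 0 ≤ α) (hR : 0 < R) (y : ℝ) : discGainCDF α R y ≤ 1 := by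
  calc discGainCDF α R y ≤ discAverage R (fun _ => 1) :=
        discAverage_mono hR.le (by fun_prop (disch := assumption)) continuous_const
          fun r _ => by linarith [exp_pos (-((1 + r ^ α) * y))]
    _ = 1 := discAverage_const hR.ne' 1

theorem discGainCDF_le_mul (hα : 0 ≤ α) (hR : 0 < R) (y : ℝ) :
    discGainCDF α R y ≤ (1 + 2 * R ^ α / (α + 2)) * y := by
  calc discGainCDF α R y ≤ discAverage R (fun r => (1 + r ^ α) * y) :=
        discAverage_mono hR.le (by fun_prop (disch := assumption))
          (by fun_prop (disch := assumption)) fun r _ => by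
            linarith [add_one_le_exp (-((1 + r ^ α) * y))]
    _ = (1 + 2 * R ^ α / (α + 2)) * y := by
      rw [discAverage_mul_const, discAverage_one_add_rpow hα hR]

theorem sub_le_discGainCDF (hα : 0 ≤ α) (hR : 0 < R) {y : ℝ} (hy : 0 ≤ y) :
    (1 + 2 * R ^ α / (α + 2)) * y - (1 + R ^ α) ^ 2 * y ^ 2 ≤ discGainCDF α R y := by
  calc (1 + 2 * R ^ α / (α + 2)) * y - (1 + R ^ α) ^ 2 * y ^ 2
      = discAverage R (fun r => (1 + r ^ α) * y - (1 + R ^ α) ^ 2 * y ^ 2) := by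
        rw [discAverage_sub_const hR.ne' (by fun_prop (disch := assumption)),
          discAverage_mul_const, discAverage_one_add_rpow hα hR]
    _ ≤ discGainCDF α R y := by
      refine discAverage_mono hR.le (by fun_prop (disch := assumption))
        (by fun_prop (disch := assumption)) fun r hr => ?_
      have hpl0 : 0 ≤ 1 + r ^ α := by linarith [rpow_nonneg hr.1 α]
      have hpl : 1 + r ^ α ≤ 1 + R ^ α := by linarith [rpow_le_rpow hr.1 hr.2 hα]
      have hsq : ((1 + r ^ α) * y) ^ 2 ≤ (1 + R ^ α) ^ 2 * y ^ 2 := by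
        rw [mul_pow]
        gcongr
      linarith [sub_sq_le_one_sub_exp_neg (mul_nonneg hpl0 hy)]

theorem tendsto_discGainCDF_nhdsGT_zero (hα : 0 ≤ α) (hR : 0 < R) :
    Tendsto (discGainCDF α R) (𝓝[>] 0) (𝓝 0) := by
  have hlin : Tendsto (fun y => (1 + 2 * R ^ α / (α + 2)) * y) (𝓝[>] 0) (𝓝 0) := by
    simpa using tendsto_nhdsWithin_of_tendsto_nhds ((continuous_const_mul _).tendsto (0 : ℝ))
  refine tendsto_of_tendsto_of_tendsto_of_le_of_le' tendsto_const_nhds hlin ?_ ?_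
  · filter_upwards [self_mem_nhdsWithin] with y hy using discGainCDF_nonneg hα hR (le_of_lt hy)
  · exact Eventually.of_forall (discGainCDF_le_mul hα hR)

theorem tendsto_discGainCDF_div (hα : 0 ≤ α) (hR : 0 < R) :
    Tendsto (fun y => discGainCDF α R y / y) (𝓝[>] 0) (𝓝 (1 + 2 * R ^ α / (α + 2))) := by
  set ℓ := 1 + 2 * R ^ α / (α + 2)
  have hlow : Tendsto (fun y => ℓ - (1 + R ^ α) ^ 2 * y) (𝓝[>] 0) (𝓝 ℓ) := by
    have hcont : Continuous fun y : ℝ => ℓ - (1 + R ^ α) ^ 2 * y := by fun_prop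
    simpa using tendsto_nhdsWithin_of_tendsto_nhds (hcont.tendsto 0)
  refine tendsto_of_tendsto_of_tendsto_of_le_of_le' hlow tendsto_const_nhds ?_ ?_
  all_goals filter_upwards [self_mem_nhdsWithin] with y (hy : 0 < y)
  · rw [le_div_iff₀ hy]
    linarith [sub_le_discGainCDF hα hR hy.le]
  · rw [div_le_iff₀ hy]
    linarith [discGainCDF_le_mul hα hR y]

end discGainCDF

/-- Probability that at least `n` of `M` independent events of probability `p` occur: the CDF of
the `n`-th smallest of `M` i.i.d. samples, as a function of their common CDF value `p`. -/
noncomputable def orderStatCDF (M n : ℕ) (p : ℝ) : ℝ :=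
  ∑ k ∈ Icc n M, (M.choose k : ℝ) * p ^ k * (1 - p) ^ (M - k)

section orderStatCDF

variable {M n : ℕ} {p : ℝ}

theorem continuous_orderStatCDF : Continuous (orderStatCDF M n) := by
  unfold orderStatCDF
  fun_prop

theorem orderStatCDF_nonneg (hp0 : 0 ≤ p) (hp1 : p ≤ 1) : 0 ≤ orderStatCDF M n p :=
  sum_nonneg fun _ _ => mul_nonneg (by positivity) (pow_nonneg (sub_nonneg.2 hp1) _)

theorem orderStatCDF_le_two_pow_mul (hp0 : 0 ≤ p) (hp1 : p ≤ 1) :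
    orderStatCDF M n p ≤ 2 ^ M * p ^ n := by
  have hchoose : ∑ k ∈ Icc n M, (M.choose k : ℝ) ≤ 2 ^ M := by
    calc ∑ k ∈ Icc n M, (M.choose k : ℝ) ≤ ∑ k ∈ range (M + 1), (M.choose k : ℝ) :=
          sum_le_sum_of_subset_of_nonneg (fun k hk => by simp at hk ⊢; omega)
            fun _ _ _ => by positivity
      _ = 2 ^ M := by exact_mod_cast Nat.sum_range_choose M
  calc orderStatCDF M n p ≤ ∑ k ∈ Icc n M, (M.choose k : ℝ) * p ^ n := by
        refine sum_le_sum fun k hk => ?_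
        have hpk : p ^ k ≤ p ^ n := pow_le_pow_of_le_one hp0 hp1 (mem_Icc.1 hk).1
        have hq : (1 - p) ^ (M - k) ≤ 1 := pow_le_one₀ (by linarith) (by linarith)
        calc (M.choose k : ℝ) * p ^ k * (1 - p) ^ (M - k) ≤ (M.choose k : ℝ) * p ^ k * 1 := by
              gcongr
          _ ≤ (M.choose k : ℝ) * p ^ n := by
              rw [mul_one]
              gcongr
    _ ≤ 2 ^ M * p ^ n := by
        rw [← sum_mul]
        gcongr

theorem tendsto_orderStatCDF_div_pow {ι : Type*} {l : Filter ι} {q y : ι → ℝ} {L : ℝ}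
    (hnM : n ≤ M) (hq : Tendsto q l (𝓝 0)) (hqy : Tendsto (fun t => q t / y t) l (𝓝 L)) :
    Tendsto (fun t => orderStatCDF M n (q t) / y t ^ n) l (𝓝 (M.choose n * L ^ n)) := by
  have hsplit : ∀ t, orderStatCDF M n (q t) / y t ^ n = ∑ k ∈ Icc n M,
      (M.choose k : ℝ) * (q t / y t) ^ n * q t ^ (k - n) * (1 - q t) ^ (M - k) := by
    intro t
    rw [orderStatCDF, sum_div]
    refine sum_congr rfl fun k hk => ?_
    rw [← Nat.add_sub_of_le (mem_Icc.1 hk).1, pow_add, Nat.add_sub_cancel_left, div_pow]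
    ring
  have hlim : ∑ k ∈ Icc n M, (M.choose k : ℝ) * L ^ n * 0 ^ (k - n) * (1 - 0) ^ (M - k)
      = M.choose n * L ^ n := by
    rw [sum_eq_single_of_mem n (mem_Icc.2 ⟨le_rfl, hnM⟩)]
    · simp
    · intro k hk hkn
      rw [zero_pow (by have := (mem_Icc.1 hk).1; omega)]
      ring
  simp only [hsplit, ← hlim]
  exact tendsto_finsetSum _ fun k _ =>
    ((tendsto_const_nhds.mul (hqy.pow n)).mul (hq.pow _)).mul ((tendsto_const_nhds.sub hq).pow _)

end orderStatCDF

theorem aestronglyMeasurable_of_mul_right {X : Type*} [MeasurableSpace X] {μ : Measure X}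
    {f g : X → ℝ} (hg : Measurable g) (hg0 : ∀ᵐ x ∂μ, g x ≠ 0)
    (hfg : AEStronglyMeasurable (fun x => f x * g x) μ) : AEStronglyMeasurable f μ :=
  (hfg.mul hg.inv.aestronglyMeasurable).congr <| by
    filter_upwards [hg0] with x hx
    simp [hx]

theorem tendsto_pow_mul_comp_div_atTop {G : ℝ → ℝ} {A c : ℝ} {n : ℕ} (hc : 0 < c)
    (hG : Tendsto (fun y => G y / y ^ n) (𝓝[>] 0) (𝓝 A)) :
    Tendsto (fun ρ : ℝ => ρ ^ n * G (c / ρ)) atTop (𝓝 (A * c ^ n)) := by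
  have hy : Tendsto (fun ρ : ℝ => c / ρ) atTop (𝓝[>] 0) :=
    tendsto_nhdsWithin_iff.2 ⟨tendsto_const_nhds.div_atTop tendsto_id,
      (eventually_gt_atTop 0).mono fun ρ hρ => div_pos hc hρ⟩
  refine ((hG.comp hy).mul_const (c ^ n)).congr' ?_
  filter_upwards [eventually_gt_atTop 0] with ρ hρ
  simp only [Function.comp_apply, div_pow]
  field_simp

theorem tendsto_pow_mul_integral_comp_div {X : Type*} [MeasurableSpace X] {μ : Measure X}
    {f c : X → ℝ} {G : ℝ → ℝ} {n : ℕ} {K A : ℝ}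
    (hG : Measurable G) (hGle : ∀ y, 0 ≤ y → |G y| ≤ K * y ^ n)
    (hGlim : Tendsto (fun y => G y / y ^ n) (𝓝[>] 0) (𝓝 A))
    (hc : Measurable c) (hcpos : ∀ᵐ x ∂μ, 0 < c x)
    (hint : Integrable (fun x => f x * c x ^ n) μ) :
    Tendsto (fun ρ => ρ ^ n * ∫ x, f x * G (c x / ρ) ∂μ) atTop
      (𝓝 (A * ∫ x, f x * c x ^ n ∂μ)) := by
  have hf : AEStronglyMeasurable f μ :=
    aestronglyMeasurable_of_mul_right (hc.pow_const n)
      (by filter_upwards [hcpos] with x hx using by positivity) hint.1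
  have hbound : ∀ ρ > 0, ∀ x, 0 < c x → ‖f x * (ρ ^ n * G (c x / ρ))‖ ≤ K * ‖f x * c x ^ n‖ := by
    intro ρ hρ x hx
    have hscaled : |ρ ^ n * G (c x / ρ)| ≤ K * c x ^ n := by
      rw [abs_mul, abs_of_pos (by positivity)]
      calc ρ ^ n * |G (c x / ρ)| ≤ ρ ^ n * (K * (c x / ρ) ^ n) := by
            gcongr
            exact hGle _ (by positivity)
        _ = K * c x ^ n := by
            rw [div_pow]
            field_simp
    rw [Real.norm_eq_abs, Real.norm_eq_abs, abs_mul (f x), abs_mul (f x),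
      abs_of_pos (pow_pos hx n), mul_left_comm]
    exact mul_le_mul_of_nonneg_left hscaled (abs_nonneg _)
  simp only [← integral_const_mul, mul_left_comm _ (f _)]
  refine tendsto_integral_filter_of_dominated_convergence (fun x => K * ‖f x * c x ^ n‖)
    (Eventually.of_forall fun ρ => hf.mul ?_) ?_ (hint.norm.const_mul K) ?_
  · exact (measurable_const.mul (hG.comp (hc.div_const ρ))).aestronglyMeasurable
  · filter_upwards [eventually_gt_atTop 0] with ρ hρ
    filter_upwards [hcpos] with x hx using hbound ρ hρ x hx
  · filter_upwards [hcpos] with x hx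
    exact (tendsto_pow_mul_comp_div_atTop hx hGlim).const_mul (f x)

theorem cast_choose_mul_eq_factorial_div {M n : ℕ} (hn : 1 ≤ n) (hnM : n ≤ M) :
    (M.choose n : ℝ) * n = M.factorial / ((M - n).factorial * (n - 1).factorial) := by
  have hfact : (n.factorial : ℝ) = n * (n - 1).factorial := by
    rw [← Nat.mul_factorial_pred (by omega : n ≠ 0), Nat.cast_mul]
  rw [Nat.cast_choose ℝ hnM, hfact]
  have : (n : ℝ) ≠ 0 := by positivity
  field_simp

section nthGainCDF

variable {α R : ℝ} {M n : ℕ}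

theorem abs_orderStatCDF_discGainCDF_le (hα : 0 ≤ α) (hR : 0 < R) {y : ℝ} (hy : 0 ≤ y) :
    |orderStatCDF M n (discGainCDF α R y)| ≤ 2 ^ M * (1 + 2 * R ^ α / (α + 2)) ^ n * y ^ n := by
  have h0 := discGainCDF_nonneg hα hR hy
  have h1 := discGainCDF_le_one hα hR y
  rw [abs_of_nonneg (orderStatCDF_nonneg h0 h1), mul_assoc, ← mul_pow]
  calc orderStatCDF M n (discGainCDF α R y) ≤ 2 ^ M * discGainCDF α R y ^ n :=
        orderStatCDF_le_two_pow_mul h0 h1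
    _ ≤ _ := by
        gcongr
        exact discGainCDF_le_mul hα hR y

theorem tendsto_orderStatCDF_discGainCDF_div_pow (hα : 0 ≤ α) (hR : 0 < R) (hnM : n ≤ M) :
    Tendsto (fun y => orderStatCDF M n (discGainCDF α R y) / y ^ n) (𝓝[>] 0)
      (𝓝 (M.choose n * (1 + 2 * R ^ α / (α + 2)) ^ n)) :=
  tendsto_orderStatCDF_div_pow hnM (tendsto_discGainCDF_nhdsGT_zero hα hR)
    (tendsto_discGainCDF_div hα hR)

end nthGainCDF

theorem secrecy_outage_asymptotics_user_n_general
    (α R an Rn : ℝ) (M n : ℕ)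
    (hα : 0 < α) (hR : 0 < R)
    (han : 0 < an) (hRn : 0 < Rn) (hn1 : 1 ≤ n) (hnM : n ≤ M)
    (F : ℝ → ℝ)
    (hF : ∀ y : ℝ, F y = (2 / R ^ 2) * ∫ r in (0 : ℝ)..R, (1 - Real.exp (-((1 + r ^ α) * y))) * r)
    (Fn : ℝ → ℝ)
    (hFn : ∀ y : ℝ, Fn y = ∑ k ∈ Finset.Icc n M, (M.choose k : ℝ) * F y ^ k * (1 - F y) ^ (M - k))
    (ℓ φn : ℝ)
    (hℓ : ℓ = 1 + 2 * R ^ α / (α + 2))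
    (hφn : φn = (M.factorial : ℝ) / ((M - n).factorial * (n - 1).factorial))
    (f : ℝ → ℝ)
    (hint : IntegrableOn (fun x : ℝ => f x * ((2 : ℝ) ^ Rn * (1 + x) - 1) ^ n) (Set.Ioi 0))
    (Q : ℝ)
    (hQ : Q = ∫ x in Set.Ioi (0 : ℝ), f x * ((2 : ℝ) ^ Rn * (1 + x) - 1) ^ n) :
    Filter.Tendsto
      (fun ρ : ℝ => ρ ^ n *
        ∫ x in Set.Ioi (0 : ℝ), f x * Fn (((2 : ℝ) ^ Rn * (1 + x) - 1) / (ρ * an)))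
      Filter.atTop
      (nhds ((φn * ℓ ^ n / (n * an ^ n)) * Q)) := by
  obtain rfl : F = discGainCDF α R := funext hF
  obtain rfl : Fn = fun y => orderStatCDF M n (discGainCDF α R y) := funext hFn
  have hcpos : ∀ x ∈ Set.Ioi (0 : ℝ), 0 < ((2 : ℝ) ^ Rn * (1 + x) - 1) / an := fun x hx => by
    have : 1 < (2 : ℝ) ^ Rn := one_lt_rpow (by norm_num) hRn
    have : 0 < x := hx
    exact div_pos (by nlinarith) han
  have hlim := tendsto_pow_mul_integral_comp_div (μ := volume.restrict (Set.Ioi 0)) (f := f)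
    ((continuous_orderStatCDF.measurable).comp (discGainCDF_mono hα.le hR.le).measurable)
    (fun y hy => abs_orderStatCDF_discGainCDF_le (M := M) (n := n) hα.le hR hy)
    (tendsto_orderStatCDF_discGainCDF_div_pow hα.le hR hnM) (by fun_prop)
    ((ae_restrict_iff' measurableSet_Ioi).2 (ae_of_all _ hcpos))
    ((hint.div_const (an ^ n)).congr (ae_of_all _ fun x => by simp only [div_pow, mul_div_assoc]))
  have hconst : (M.choose n : ℝ) * ℓ ^ n * ∫ x in Set.Ioi 0,
      f x * (((2 : ℝ) ^ Rn * (1 + x) - 1) / an) ^ n = φn * ℓ ^ n / (n * an ^ n) * Q := by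
    simp only [div_pow, ← mul_div_assoc, integral_div, ← hQ, hφn,
      ← cast_choose_mul_eq_factorial_div hn1 hnM]
    have : (n : ℝ) ≠ 0 := by positivity
    field_simp
  rw [← hℓ] at hlim
  rw [← hconst]
  refine hlim.congr fun ρ => ?_
  simp only [div_mul_eq_div_div_swap, Function.comp_apply]

theorem secrecy_outage_asymptotics_user_n
    (α δ R μ₁ μ₂ an Rn : ℝ) (M n : ℕ)
    (hα : 0 < α) (hδ : δ = 2 / α) (hR : 0 < R) (hμ₁ : 0 < μ₁) (hμ₂ : 0 < μ₂)
    (han : 0 < an) (han1 : an < 1) (hRn : 0 < Rn) (hn1 : 1 ≤ n) (hnM : n ≤ M)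
    (F : ℝ → ℝ)
    (hF : ∀ y : ℝ, F y = (2 / R ^ 2) * ∫ r in (0 : ℝ)..R, (1 - Real.exp (-((1 + r ^ α) * y))) * r)
    (Fn : ℝ → ℝ)
    (hFn : ∀ y : ℝ, Fn y = ∑ k ∈ Finset.Icc n M, (M.choose k : ℝ) * F y ^ k * (1 - F y) ^ (M - k))
    (ℓ φn : ℝ)
    (hℓ : ℓ = 1 + 2 * R ^ α / (α + 2))
    (hφn : φn = (M.factorial : ℝ) / ((M - n).factorial * (n - 1).factorial))
    (f : ℝ → ℝ)
    (hf : ∀ x : ℝ, 0 < x →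
      f x = μ₁ * Real.exp (-(μ₁ * upperIncGamma δ (μ₂ * x) / x ^ δ)) *
        (μ₂ ^ δ * Real.exp (-(μ₂ * x)) / x + δ * upperIncGamma δ (μ₂ * x) / x ^ (δ + 1)))
    (hint : IntegrableOn (fun x : ℝ => f x * ((2 : ℝ) ^ Rn * (1 + x) - 1) ^ n) (Set.Ioi 0))
    (Q : ℝ)
    (hQ : Q = ∫ x in Set.Ioi (0 : ℝ), f x * ((2 : ℝ) ^ Rn * (1 + x) - 1) ^ n) :
    Filter.Tendsto
      (fun ρ : ℝ => ρ ^ n *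
        ∫ x in Set.Ioi (0 : ℝ), f x * Fn (((2 : ℝ) ^ Rn * (1 + x) - 1) / (ρ * an)))
      Filter.atTop
      (nhds ((φn * ℓ ^ n / (n * an ^ n)) * Q)) :=
  secrecy_outage_asymptotics_user_n_general α R an Rn M n hα hR han hRn hn1 hnM F hF Fn hFn ℓ φn hℓ
    hφn f hint Q hQ
end
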